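/- arXiv:1303.1584 — 10 statements merged into one kernel-verified Lean document; each statement's English description precedes it below -/
import Mathlib

section
/- Let A be a finite group acting via automorphisms on a finite group G with gcd(|G|,|A|) = 1. Then [G, A, A] = [G, A]. -/
/-- The subgroup `[K, A]` generated by the commutators `k⁻¹ * (a • k)` with `k ∈ K`,
for a group `A` acting on `G` by automorphisms. -/
def actComm (A : Type*) {G : Type*} [Group A] [Group G] [MulDistribMulAction A G]
    (K : Subgroup G) : Subgroup G :=
  Subgroup.closure {x : G | ∃ k ∈ K, ∃ a : A, x = k⁻¹ * a • k}

section Aux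

variable {G A : Type*} [Group G] [Group A] [MulDistribMulAction A G]

lemma actComm_le_of_inv {K : Subgroup G} (hK : ∀ (b : A) ⦃k : G⦄, k ∈ K → b • k ∈ K) :
    actComm A K ≤ K := by
  rw [actComm, Subgroup.closure_le]
  rintro x ⟨k, hk, a, rfl⟩
  exact mul_mem (inv_mem hk) (hK a hk)

lemma smul_mem_actComm {K : Subgroup G} (hK : ∀ (b : A) ⦃k : G⦄, k ∈ K → b • k ∈ K)
    (b : A) {x : G} (hx : x ∈ actComm A K) : b • x ∈ actComm A K := by
  rw [actComm] at hx ⊢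
  induction hx using Subgroup.closure_induction with
  | mem x hx =>
    obtain ⟨k, hk, c, rfl⟩ := hx
    refine Subgroup.subset_closure ⟨b • k, hK b hk, b * c * b⁻¹, ?_⟩
    rw [smul_mul', smul_inv', ← mul_smul, ← mul_smul, inv_mul_cancel_right]
  | one => simpa using one_mem _
  | mul x y hx hy ihx ihy => rw [smul_mul']; exact mul_mem ihx ihy
  | inv x hx ihx => rw [smul_inv']; exact inv_mem ihx

lemma comm_mul_eq (x y : A) (g : G) :
    g⁻¹ * (x * y) • g = (g⁻¹ * x • g) * x • (g⁻¹ * y • g) := by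
  rw [smul_mul', smul_inv', mul_smul]
  group

lemma comm_split (b : A) (g x : G) :
    g⁻¹ * b • x = (g⁻¹ * b • g) * b • (g⁻¹ * x) := by
  rw [smul_mul', smul_inv']
  group

end Aux

theorem coprime_action_comm_comm {G A : Type*} [Group G] [Group A] [Finite G] [Finite A]
    [MulDistribMulAction A G]
    (h : Nat.Coprime (Nat.card G) (Nat.card A)) :
    actComm A (actComm A (⊤ : Subgroup G)) = actComm A (⊤ : Subgroup G) := by
  set K : Subgroup G := actComm A (⊤ : Subgroup G) with hKdef
  have htopinv : ∀ (b : A) ⦃k : G⦄, k ∈ (⊤ : Subgroup G) → b • k ∈ (⊤ : Subgroup G) :=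
    fun _ _ _ => Subgroup.mem_top _
  have hKinv : ∀ (b : A) ⦃k : G⦄, k ∈ K → b • k ∈ K :=
    fun b k hk => smul_mem_actComm htopinv b hk
  set M : Subgroup G := actComm A K with hMdef
  have hMinv : ∀ (b : A) ⦃x : G⦄, x ∈ M → b • x ∈ M :=
    fun b x hx => smul_mem_actComm hKinv b hx
  have hMK : M ≤ K := actComm_le_of_inv hKinv
  -- the key claim
  have key : ∀ n : ℕ, ∀ a : A, orderOf a = n → ∀ g : G, g⁻¹ * a • g ∈ M := by
    intro n
    induction n using Nat.strong_induction_on with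
    | _ n ih =>
      intro a han g
      rcases eq_or_ne n 1 with h1 | h1
      · have ha1 : a = 1 := orderOf_eq_one_iff.mp (han.trans h1)
        rw [ha1, one_smul, inv_mul_cancel]
        exact one_mem M
      by_cases hpp : IsPrimePow n
      · -- prime power case
        obtain ⟨q, e, hq, he, hn⟩ := hpp
        have hq' : Nat.Prime q := hq.nat_prime
        have hqG : ¬ (q ∣ Nat.card G) := by
          intro hdvd
          have hqA : q ∣ Nat.card A := by
            refine dvd_trans ?_ (orderOf_dvd_natCard a)
            rw [han, ← hn]
            exact dvd_pow_self q he.ne'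
          have : q ∣ 1 := h ▸ Nat.dvd_gcd hdvd hqA
          exact hq'.ne_one (Nat.dvd_one.mp this)
        set H : Subgroup G :=
          Subgroup.closure {x : G | ∃ g' : G, ∃ i : ℤ, x = g'⁻¹ * (a ^ i) • g'} with hHdef
        have hHK : H ≤ K := by
          rw [hHdef, Subgroup.closure_le]
          rintro x ⟨g', i, rfl⟩
          exact Subgroup.subset_closure ⟨g', Subgroup.mem_top _, a ^ i, rfl⟩
        have hHinv : ∀ (i : ℤ) ⦃x : G⦄, x ∈ H → (a ^ i) • x ∈ H := by
          intro i x hx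
          rw [hHdef] at hx ⊢
          induction hx using Subgroup.closure_induction with
          | mem x hx =>
            obtain ⟨g', j, rfl⟩ := hx
            refine Subgroup.subset_closure ⟨a ^ i • g', j, ?_⟩
            rw [smul_mul', smul_inv', ← mul_smul, ← mul_smul, ← zpow_add, ← zpow_add,
              add_comm]
          | one => simpa using one_mem _
          | mul x y hx hy ihx ihy => rw [smul_mul']; exact mul_mem ihx ihy
          | inv x hx ihx => rw [smul_inv']; exact inv_mem ihx
        -- the coset of H containing g, as a type with a P-action
        let P : Subgroup A := Subgroup.zpowers a
        let C : Type _ := {x : G // g⁻¹ * x ∈ H}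
        letI : MulAction P C :=
          { smul := fun p x => ⟨(p : A) • (x : G), by
              obtain ⟨i, hi⟩ := p.2
              rw [← hi]
              rw [comm_split (a ^ i) g (x : G)]
              exact mul_mem (Subgroup.subset_closure ⟨g, i, rfl⟩) (hHinv i x.2)⟩
            one_smul := fun x => Subtype.ext (by
              show ((1 : P) : A) • (x : G) = (x : G)
              rw [OneMemClass.coe_one, one_smul])
            mul_smul := fun p p' x => Subtype.ext (by
              show ((p * p' : P) : A) • (x : G) = (p : A) • ((p' : A) • (x : G))
              rw [Subgroup.coe_mul, mul_smul]) }
        have hP : IsPGroup q P := IsPGroup.of_card (n := e)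
          ((Nat.card_zpowers a).trans (han.trans hn.symm))
        have hCH : Nat.card C = Nat.card H := by
          refine Nat.card_congr ⟨fun x => ⟨g⁻¹ * (x : G), x.2⟩,
            fun y => ⟨g * (y : G), by simp⟩, fun x => ?_, fun y => ?_⟩
          · exact Subtype.ext (by simp)
          · exact Subtype.ext (by simp)
        have hqC : ¬ (q ∣ Nat.card C) := by
          rw [hCH]
          exact fun hdvd => hqG (hdvd.trans (Subgroup.card_subgroup_dvd_card H))
        haveI : Fact (Nat.Prime q) := ⟨hq'⟩
        obtain ⟨c, hc⟩ := hP.nonempty_fixed_point_of_prime_not_dvd_card C hqC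
        have hfix : a • (c : G) = (c : G) := by
          have := hc ⟨a, Subgroup.mem_zpowers a⟩
          exact congrArg Subtype.val this
        set h' : G := (c : G)⁻¹ * g with hh'def
        have hh'H : h' ∈ H := by
          have : (g⁻¹ * (c : G))⁻¹ ∈ H := inv_mem c.2
          rwa [mul_inv_rev, inv_inv] at this
        have hg : g = (c : G) * h' := by rw [hh'def, mul_inv_cancel_left]
        have heq : g⁻¹ * a • g = h'⁻¹ * a • h' := by
          rw [hg, smul_mul', hfix]
          group
        rw [heq]
        exact Subgroup.subset_closure ⟨h', hHK hh'H, a, rfl⟩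
      · -- composite case
        have hn0 : n ≠ 0 := by
          rw [← han]; exact (orderOf_pos a).ne'
        obtain ⟨q, hq', hqn⟩ := Nat.exists_prime_and_dvd h1
        set s : ℕ := q ^ (n.factorization q) with hsdef
        set t : ℕ := n / s with htdef
        have hst : s * t = n := Nat.ordProj_mul_ordCompl_eq_self n q
        have hcop : Nat.Coprime s t :=
          Nat.Coprime.pow_left _ (Nat.coprime_ordCompl hq' hn0)
        have hepos : 0 < n.factorization q := hq'.factorization_pos_of_dvd hn0 hqn
        have hs1 : 1 < s := by
          calc 1 < q := hq'.one_lt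
          _ ≤ s := Nat.le_self_pow hepos.ne' q
        have ht1 : t ≠ 1 := by
          intro ht
          refine hpp ⟨q, n.factorization q, hq'.prime, hepos, ?_⟩
          rw [← hsdef, ← hst, ht, mul_one]
        have ht0 : t ≠ 0 := by
          intro ht
          rw [ht, mul_zero] at hst
          exact hn0 hst.symm
        have ht2 : 2 ≤ t := (Nat.two_le_iff t).mpr ⟨ht0, ht1⟩
        have hs2 : 2 ≤ s := hs1
        have htn : t < n := by
          rw [← hst]
          calc t < 2 * t := by omega
          _ ≤ s * t := Nat.mul_le_mul_right t hs2
        have hsn : s < n := by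
          rw [← hst]
          calc s < s * 2 := by omega
          _ ≤ s * t := Nat.mul_le_mul_left s ht2
        obtain ⟨u, v, huv⟩ := Nat.isCoprime_iff_coprime.mpr hcop
        set x : A := a ^ (u * (s : ℤ)) with hxdef
        set y : A := a ^ (v * (t : ℤ)) with hydef
        have hxy : x * y = a := by
          rw [hxdef, hydef, ← zpow_add, huv, zpow_one]
        have han' : a ^ ((n : ℕ) : ℤ) = 1 := by
          rw [zpow_natCast, ← han, pow_orderOf_eq_one]
        have hx : x ^ t = 1 := by
          rw [hxdef, ← zpow_natCast, ← zpow_mul]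
          have : u * (s : ℤ) * (t : ℕ) = ((s * t : ℕ) : ℤ) * u := by push_cast; ring
          rw [this, hst, zpow_mul, han', one_zpow]
        have hy : y ^ s = 1 := by
          rw [hydef, ← zpow_natCast, ← zpow_mul]
          have : v * (t : ℤ) * (s : ℕ) = ((s * t : ℕ) : ℤ) * v := by push_cast; ring
          rw [this, hst, zpow_mul, han', one_zpow]
        have hox : orderOf x < n :=
          lt_of_le_of_lt (Nat.le_of_dvd (Nat.pos_of_ne_zero ht0)
            (orderOf_dvd_of_pow_eq_one hx)) htn
        have hoy : orderOf y < n :=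
          lt_of_le_of_lt (Nat.le_of_dvd (lt_trans one_pos hs1)
            (orderOf_dvd_of_pow_eq_one hy)) hsn
        rw [← hxy, comm_mul_eq]
        exact mul_mem (ih _ hox x rfl g) (hMinv x (ih _ hoy y rfl g))
  -- conclude
  refine le_antisymm hMK ?_
  rw [hKdef, actComm, Subgroup.closure_le]
  rintro x ⟨g, -, a, rfl⟩
  exact key (orderOf a) a rfl g
end

section
/- Let A be a group of automorphisms of a finite group G with gcd(|A|,|G|) = 1. Suppose B is a normal subset of A (a union of conjugacy classes of A) generating A, and let k ≥ 1 be an integer. Then [G, A] is generated by the subgroups of the form [G, b₁, …, b_k] where b₁, …, b_k ∈ B. -/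
/-- The subgroup `[K, b]` generated by the commutators `k⁻¹ * (b • k)` with `k ∈ K`. -/
def elemComm {A G : Type*} [Group A] [Group G] [MulDistribMulAction A G]
    (b : A) (K : Subgroup G) : Subgroup G :=
  Subgroup.closure {x : G | ∃ k ∈ K, x = k⁻¹ * b • k}

/-- Coprime fixed-point lemma: if `φ^[n]` is the identity on the coset `g • N`,
`φ` maps the coset into itself, and `n` is coprime to `|N|`, then `φ` has a fixed
point on the coset. -/
private lemma coset_fixed {G : Type*} [Group G] [Finite G] (φ : G →* G) :
    ∀ (M n : ℕ), n ≠ 0 → ∀ (N : Subgroup G) (g : G), n * Nat.card N ≤ M →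
      Nat.Coprime n (Nat.card N) →
      (∀ m ∈ N, g⁻¹ * φ (g * m) ∈ N) →
      (∀ m ∈ N, φ^[n] (g * m) = g * m) →
      ∃ m ∈ N, φ (g * m) = g * m := by
  intro M
  induction M with
  | zero =>
      intro n hn N g hle _ _ _
      have hc : 0 < Nat.card N := Nat.card_pos
      rcases Nat.mul_eq_zero.mp (Nat.le_zero.mp hle) with h | h <;> omega
  | succ M IH =>
      intro n hn N g hle hco h1 h2
      by_cases hn1 : n = 1
      · subst hn1
        exact ⟨1, one_mem N, by simpa using h2 1 (one_mem N)⟩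
      have hcpos : 0 < Nat.card N := Nat.card_pos
      set p := n.minFac with hp_def
      have hp : p.Prime := Nat.minFac_prime hn1
      have hpdvd : p ∣ n := Nat.minFac_dvd n
      set q := n / p with hq_def
      have hqp : q * p = n := Nat.div_mul_cancel hpdvd
      have hq0 : q ≠ 0 := by
        intro h; rw [h, zero_mul] at hqp; exact hn hqp.symm
      have hqlt : q < n := Nat.div_lt_self (Nat.pos_of_ne_zero hn) hp.one_lt
      -- iterates of φ map the coset into itself
      have hstep : ∀ (j : ℕ), ∀ m ∈ N, g⁻¹ * φ^[j] (g * m) ∈ N := by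
        intro j
        induction j with
        | zero => intro m hm; simpa using hm
        | succ j ihj =>
            intro m hm
            have h' := ihj m hm
            have heq : φ^[j + 1] (g * m) = φ (g * (g⁻¹ * φ^[j] (g * m))) := by
              rw [mul_inv_cancel_left, Function.iterate_succ_apply']
            rw [heq]
            exact h1 _ h'
      -- the permutation induced by φ^[q] on N-coordinates
      let σ : N → N := fun m => ⟨g⁻¹ * φ^[q] (g * (m : G)), hstep q m m.2⟩
      have hσ : ∀ (j : ℕ) (m : N), (σ^[j] m : G) = g⁻¹ * φ^[q * j] (g * (m : G)) := by
        intro j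
        induction j with
        | zero => intro m; simp
        | succ j ihj =>
            intro m
            rw [Function.iterate_succ_apply']
            show g⁻¹ * φ^[q] (g * (σ^[j] m : G)) = _
            rw [ihj m, mul_inv_cancel_left, ← Function.iterate_add_apply]
            have : q + q * j = q * (j + 1) := by ring
            rw [this]
      have hσp : ∀ m : N, σ^[p] m = m := by
        intro m
        apply Subtype.ext
        rw [hσ p m, hqp, h2 m m.2, inv_mul_cancel_left]
      have hp1 : p - 1 + 1 = p := Nat.succ_pred_eq_of_pos hp.pos
      let e : Equiv.Perm N :=
        { toFun := σ
          invFun := σ^[p - 1]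
          left_inv := fun m => by
            rw [← Function.iterate_succ_apply σ (p - 1) m, Nat.succ_eq_add_one, hp1]; exact hσp m
          right_inv := fun m => by
            rw [← Function.iterate_succ_apply' σ (p - 1) m, Nat.succ_eq_add_one, hp1]; exact hσp m }
      have hepow : ∀ (j : ℕ) (m : N), (e ^ j) m = σ^[j] m := by
        intro j
        induction j with
        | zero => intro m; rfl
        | succ j ihj =>
            intro m
            rw [pow_succ, Equiv.Perm.mul_apply, ihj, Function.iterate_succ_apply]
            rfl
      have hep : e ^ p = 1 := by
        apply Equiv.ext
        intro m
        rw [hepow p m, hσp m]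
        rfl
      have hpcop : ¬ p ∣ Nat.card N :=
        (Nat.Prime.coprime_iff_not_dvd hp).mp (Nat.Coprime.coprime_dvd_left hpdvd hco)
      have hpg : IsPGroup p (Subgroup.zpowers e) := by
        intro x
        refine ⟨1, ?_⟩
        obtain ⟨i, hi⟩ := Subgroup.mem_zpowers_iff.mp x.2
        have hx : (x : Equiv.Perm N) ^ (p ^ 1) = 1 := by
          rw [← hi, pow_one, ← zpow_natCast, ← zpow_mul, mul_comm, zpow_mul,
            zpow_natCast, hep, one_zpow]
        exact Subtype.ext (by push_cast; exact hx)
      haveI : Fact p.Prime := ⟨hp⟩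
      have hfix : (MulAction.fixedPoints (Subgroup.zpowers e) N).Nonempty :=
        hpg.nonempty_fixed_point_of_prime_not_dvd_card N (by simpa using hpcop)
      obtain ⟨m₀, hm₀fix⟩ := hfix
      have hem : e m₀ = m₀ := hm₀fix (⟨e, Subgroup.mem_zpowers e⟩ : Subgroup.zpowers e)
      have hψx : φ^[q] (g * (m₀ : G)) = g * (m₀ : G) := by
        have h' : g⁻¹ * φ^[q] (g * (m₀ : G)) = (m₀ : G) := congrArg Subtype.val hem
        conv_lhs => rw [← mul_inv_cancel_left g (φ^[q] (g * (m₀ : G))), h']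
      by_cases hall : ∀ m ∈ N, φ^[q] m = m
      · refine IH q hq0 N g ?_ ?_ h1 ?_
        · have := Nat.mul_lt_mul_of_pos_right hqlt hcpos
          omega
        · exact Nat.Coprime.coprime_dvd_left ⟨p, hqp.symm⟩ hco
        · intro m hm
          have hmm : (m₀ : G)⁻¹ * m ∈ N := mul_mem (inv_mem m₀.2) hm
          have heq : g * m = (g * (m₀ : G)) * ((m₀ : G)⁻¹ * m) := by group
          rw [heq, iterate_map_mul, hψx, hall _ hmm]
      · push_neg at hall
        obtain ⟨m₁, hm₁N, hm₁⟩ := hall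
        set x := g * (m₀ : G) with hxdef
        let N' : Subgroup G :=
          { carrier := {m : G | m ∈ N ∧ φ^[q] m = m}
            one_mem' := ⟨one_mem N, by rw [iterate_map_one]⟩
            mul_mem' := fun ha hb => ⟨mul_mem ha.1 hb.1, by rw [iterate_map_mul, ha.2, hb.2]⟩
            inv_mem' := fun ha => ⟨inv_mem ha.1, by rw [iterate_map_inv, ha.2]⟩ }
        have hN'le : N' ≤ N := fun m hm => hm.1
        have hcard : Nat.card N' < Nat.card N := by
          have hss : (N' : Set G) ⊂ (N : Set G) :=
            ⟨fun y hy => hy.1, fun h => hm₁ (h hm₁N).2⟩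
          have := Set.ncard_lt_ncard hss (Set.toFinite _)
          rwa [← Nat.card_coe_set_eq, ← Nat.card_coe_set_eq] at this
        have hle' : n * Nat.card N' ≤ M := by
          have := Nat.mul_lt_mul_of_pos_left hcard (Nat.pos_of_ne_zero hn)
          omega
        have hco' : Nat.Coprime n (Nat.card N') :=
          Nat.Coprime.coprime_dvd_right (Subgroup.card_dvd_of_le hN'le) hco
        have h1' : ∀ m ∈ N', x⁻¹ * φ (x * m) ∈ N' := by
          intro m hm
          obtain ⟨hmN, hmq⟩ := hm
          set y := x⁻¹ * φ (x * m) with hydef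
          have hymem : y ∈ N := by
            rw [hydef, hxdef, mul_assoc g, mul_inv_rev, mul_assoc]
            exact mul_mem (inv_mem m₀.2) (h1 _ (mul_mem m₀.2 hmN))
          refine ⟨hymem, ?_⟩
          have hxy : x * y = φ (x * m) := by rw [hydef, mul_inv_cancel_left]
          have h5 : φ^[q] (x * m) = x * m := by rw [iterate_map_mul, hψx, hmq]
          have h6 : φ^[q] (x * y) = x * y := by
            rw [hxy, ← Function.iterate_succ_apply φ q, Function.iterate_succ_apply' φ q, h5]
          have h8 : φ^[q] (x * y) = x * φ^[q] y := by rw [iterate_map_mul, hψx]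
          exact mul_left_cancel (h8.symm.trans h6)
        have h2' : ∀ m ∈ N', φ^[n] (x * m) = x * m := by
          intro m hm
          rw [hxdef, mul_assoc]
          exact h2 _ (mul_mem m₀.2 hm.1)
        obtain ⟨m, hmN', hmfix⟩ := IH n hn N' x hle' hco' h1' h2'
        refine ⟨(m₀ : G) * m, mul_mem m₀.2 (hN'le hmN'), ?_⟩
        rw [← mul_assoc]
        exact hmfix

section Aux

variable {A G : Type*} [Group A] [Group G] [MulDistribMulAction A G]

/-- The action of a single element as a monoid homomorphism. -/
private def smulHom (b : A) : G →* G :=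
  { toFun := fun x => b • x
    map_one' := smul_one b
    map_mul' := fun x y => smul_mul' b x y }

private lemma smulHom_apply (b : A) (x : G) : smulHom (G := G) b x = b • x := rfl

private lemma elemComm_le_self (b : A) (K : Subgroup G) :
    elemComm b K ≤ elemComm b (⊤ : Subgroup G) := by
  apply Subgroup.closure_le _ |>.mpr
  rintro x ⟨m, hm, rfl⟩
  exact Subgroup.subset_closure ⟨m, Subgroup.mem_top m, rfl⟩

private lemma smul_mem_elemComm_top (b : A) {m : G}
    (hm : m ∈ elemComm b (⊤ : Subgroup G)) : b • m ∈ elemComm b (⊤ : Subgroup G) := by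
  induction hm using Subgroup.closure_induction with
  | mem x hx =>
      obtain ⟨k, -, rfl⟩ := hx
      exact Subgroup.subset_closure ⟨b • k, Subgroup.mem_top _, by rw [smul_mul', smul_inv']⟩
  | one => simpa using one_mem (elemComm b (⊤ : Subgroup G))
  | mul x y hx hy ihx ihy => rw [smul_mul']; exact mul_mem ihx ihy
  | inv x hx ihx => rw [smul_inv']; exact inv_mem ihx

private lemma elemComm_idem [Finite A] [Finite G]
    (hco : Nat.Coprime (Nat.card A) (Nat.card G)) (b : A) :
    elemComm b (elemComm b (⊤ : Subgroup G)) = elemComm b (⊤ : Subgroup G) := by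
  set K := elemComm b (⊤ : Subgroup G) with hK
  apply le_antisymm (elemComm_le_self b K)
  apply Subgroup.closure_le _ |>.mpr
  rintro x ⟨g, -, rfl⟩
  have hn : orderOf b ≠ 0 := (orderOf_pos b).ne'
  have hcoK : Nat.Coprime (orderOf b) (Nat.card K) :=
    Nat.Coprime.coprime_dvd_right (Subgroup.card_subgroup_dvd_card K)
      (Nat.Coprime.coprime_dvd_left (orderOf_dvd_natCard b) hco)
  have h1 : ∀ m ∈ K, g⁻¹ * smulHom (G := G) b (g * m) ∈ K := by
    intro m hm
    rw [smulHom_apply, smul_mul', ← mul_assoc]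
    exact mul_mem (Subgroup.subset_closure ⟨g, Subgroup.mem_top g, rfl⟩)
      (smul_mem_elemComm_top b hm)
  have h2 : ∀ m ∈ K, (smulHom (G := G) b)^[orderOf b] (g * m) = g * m := by
    intro m hm
    have hiter : ⇑(smulHom (G := G) b) = (b • · : G → G) := rfl
    rw [hiter, smul_iterate, pow_orderOf_eq_one b]
    exact one_smul A (g * m)
  obtain ⟨m, hmK, hfix⟩ :=
    coset_fixed (smulHom (G := G) b) (orderOf b * Nat.card K) (orderOf b) hn K g le_rfl
      hcoK h1 h2
  have hb : b • (g * m) = g * m := hfix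
  rw [smul_mul'] at hb
  have heq : g⁻¹ * b • g = (m⁻¹)⁻¹ * b • m⁻¹ := by
    rw [inv_inv, smul_inv']
    have hbg : b • g = g * m * (b • m)⁻¹ := by rw [← hb]; group
    rw [hbg]; group
  exact heq ▸ Subgroup.subset_closure ⟨m⁻¹, inv_mem hmK, rfl⟩

private lemma foldl_replicate [Finite A] [Finite G]
    (hco : Nat.Coprime (Nat.card A) (Nat.card G)) (b : A) :
    ∀ k : ℕ, 1 ≤ k →
      (List.replicate k b).foldl (fun K c => elemComm c K) (⊤ : Subgroup G) =
        elemComm b (⊤ : Subgroup G) := by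
  intro k
  induction k with
  | zero => omega
  | succ k ih =>
      intro _
      by_cases hk0 : k = 0
      · subst hk0; simp
      · rw [List.replicate_succ', List.foldl_append, ih (Nat.one_le_iff_ne_zero.mpr hk0)]
        simp [elemComm_idem hco b]

end Aux

theorem comm_eq_iSup_list_comm {A G : Type*} [Group A] [Group G] [Finite A] [Finite G]
    [MulDistribMulAction A G]
    (hco : Nat.Coprime (Nat.card A) (Nat.card G))
    (B : Set A) (hBnormal : ∀ a : A, ∀ b ∈ B, a * b * a⁻¹ ∈ B)
    (hBgen : Subgroup.closure B = ⊤) (k : ℕ) (hk : 1 ≤ k) :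
    actComm A (⊤ : Subgroup G) =
      ⨆ l ∈ {l : List A | l.length = k ∧ ∀ b ∈ l, b ∈ B},
        l.foldl (fun K b => elemComm b K) (⊤ : Subgroup G) := by
  set R := ⨆ l ∈ {l : List A | l.length = k ∧ ∀ b ∈ l, b ∈ B},
      l.foldl (fun K b => elemComm b K) (⊤ : Subgroup G) with hR
  apply le_antisymm
  · -- `[G, A] ≤ R`
    have key : ∀ a : A, ∀ g : G, g⁻¹ * a • g ∈ R := by
      intro a
      have ha : a ∈ Subgroup.closure B := hBgen ▸ Subgroup.mem_top a
      induction ha using Subgroup.closure_induction with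
      | mem b hb =>
          intro g
          have hmem : List.replicate k b ∈
              {l : List A | l.length = k ∧ ∀ b ∈ l, b ∈ B} := by
            refine ⟨List.length_replicate, fun c hc => ?_⟩
            rw [List.eq_of_mem_replicate hc]; exact hb
          have hle : (List.replicate k b).foldl (fun K c => elemComm c K)
              (⊤ : Subgroup G) ≤ R := by
            rw [hR]
            exact le_iSup₂ (f := fun (l : List A)
              (_ : l ∈ {l : List A | l.length = k ∧ ∀ b ∈ l, b ∈ B}) =>
              l.foldl (fun K c => elemComm c K) (⊤ : Subgroup G))
              (List.replicate k b) hmem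
          rw [foldl_replicate hco b k hk] at hle
          exact hle (Subgroup.subset_closure ⟨g, Subgroup.mem_top g, rfl⟩)
      | one => intro g; simpa using one_mem R
      | mul x y hx hy ihx ihy =>
          intro g
          have heq : g⁻¹ * (x * y) • g = (g⁻¹ * y • g) * ((y • g)⁻¹ * x • (y • g)) := by
            rw [mul_smul]; group
          rw [heq]
          exact mul_mem (ihy g) (ihx (y • g))
      | inv x hx ihx =>
          intro g
          have heq : g⁻¹ * x⁻¹ • g = ((x⁻¹ • g)⁻¹ * x • (x⁻¹ • g))⁻¹ := by
            rw [smul_inv_smul]; group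
          rw [heq]
          exact inv_mem (ihx (x⁻¹ • g))
    apply Subgroup.closure_le _ |>.mpr
    rintro x ⟨g, -, a, rfl⟩
    exact key a g
  · -- `R ≤ [G, A]`
    apply iSup₂_le
    intro l hl
    obtain ⟨hlen, -⟩ := hl
    have hne : l ≠ [] := by
      intro h; rw [h] at hlen; simp at hlen; omega
    obtain ⟨l', c, rfl⟩ := l.eq_nil_or_concat'.resolve_left hne
    rw [List.foldl_append]
    simp only [List.foldl_cons, List.foldl_nil]
    apply Subgroup.closure_le _ |>.mpr
    rintro x ⟨m, -, rfl⟩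
    exact Subgroup.subset_closure ⟨m, Subgroup.mem_top m, c, rfl⟩
end

section
/- Let i and m be positive integers, let P be an abelian p-group acted on by a p′-group A (via automorphisms), and suppose the set {[x, a₁, …, a_i] : x ∈ P, a₁, …, a_i ∈ A} has exactly m elements. Then every element of [P, ·_i A] is a product of distinct elements of this set; in particular |[P, ·_i A]| ≤ 2^m. -/
section Aux

variable {P A : Type*} [CommGroup P] [Group A] [MulDistribMulAction A P]

/-- In an abelian group, `k ↦ k⁻¹ * a • k` is a homomorphism. -/
def commHom (a : A) : P →* P where
  toFun k := k⁻¹ * a • k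
  map_one' := by simp
  map_mul' x y := by
    show (x * y)⁻¹ * a • (x * y) = (x⁻¹ * a • x) * (y⁻¹ * a • y)
    rw [smul_mul', mul_inv]
    ac_rfl

/-- The set of `i`-fold commutators. -/
def itS (A : Type*) [Group A] (P : Type*) [CommGroup P] [MulDistribMulAction A P]
    (i : ℕ) : Set P :=
  {g : P | ∃ (x : P) (l : List A), l.length = i ∧
    g = l.foldl (fun y a => y⁻¹ * a • y) x}

lemma itS_zero : itS A P 0 = Set.univ := by
  ext g
  simp only [itS, Set.mem_setOf_eq, Set.mem_univ, iff_true]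
  exact ⟨g, [], rfl, rfl⟩

lemma itS_succ (i : ℕ) :
    itS A P (i + 1) = {x : P | ∃ k ∈ itS A P i, ∃ a : A, x = k⁻¹ * a • k} := by
  ext g
  constructor
  · rintro ⟨x, l, hl, rfl⟩
    rcases l.eq_nil_or_concat with rfl | ⟨L, b, rfl⟩
    · simp at hl
    · refine ⟨L.foldl (fun y a => y⁻¹ * a • y) x, ⟨x, L, ?_, rfl⟩, b, ?_⟩
      · simpa using hl
      · simp [List.concat_eq_append]
  · rintro ⟨k, ⟨x, l, hl, rfl⟩, a, rfl⟩
    exact ⟨x, l ++ [a], by simp [hl], by simp⟩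

lemma foldl_mul (l : List A) (x y : P) :
    l.foldl (fun y a => y⁻¹ * a • y) (x * y) =
      l.foldl (fun y a => y⁻¹ * a • y) x * l.foldl (fun y a => y⁻¹ * a • y) y := by
  induction l generalizing x y with
  | nil => rfl
  | cons a l ih =>
    simp only [List.foldl_cons]
    rw [← ih]
    congr 1
    exact (commHom a).map_mul x y

lemma foldl_inv (l : List A) (x : P) :
    l.foldl (fun y a => y⁻¹ * a • y) x⁻¹ = (l.foldl (fun y a => y⁻¹ * a • y) x)⁻¹ := by
  induction l generalizing x with
  | nil => rfl
  | cons a l ih =>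
    simp only [List.foldl_cons]
    rw [← ih]
    congr 1
    exact (commHom a).map_inv x

lemma itS_sq {i : ℕ} {g : P} (hg : g ∈ itS A P i) : g * g ∈ itS A P i := by
  obtain ⟨x, l, hl, rfl⟩ := hg
  exact ⟨x * x, l, hl, (foldl_mul l x x).symm⟩

lemma itS_inv {i : ℕ} {g : P} (hg : g ∈ itS A P i) : g⁻¹ ∈ itS A P i := by
  obtain ⟨x, l, hl, rfl⟩ := hg
  exact ⟨x⁻¹, l, hl, (foldl_inv l x).symm⟩

lemma actComm_closure (i : ℕ) :
    actComm A (Subgroup.closure (itS A P i)) = Subgroup.closure (itS A P (i + 1)) := by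
  rw [actComm]
  apply le_antisymm
  · rw [Subgroup.closure_le]
    rintro g ⟨k, hk, a, rfl⟩
    have h1 : (commHom a : P →* P) k ∈
        (Subgroup.closure (itS A P i)).map (commHom a : P →* P) :=
      Subgroup.mem_map_of_mem _ hk
    rw [MonoidHom.map_closure] at h1
    have h2 : (commHom (P := P) a) '' itS A P i ⊆ itS A P (i + 1) := by
      rintro _ ⟨y, hy, rfl⟩
      rw [itS_succ]
      exact ⟨y, hy, a, rfl⟩
    exact Subgroup.closure_mono h2 h1
  · apply Subgroup.closure_mono
    rw [itS_succ]
    rintro g ⟨k, hk, a, rfl⟩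
    exact ⟨k, Subgroup.subset_closure hk, a, rfl⟩

lemma iterate_actComm (i : ℕ) :
    (fun K => actComm A K)^[i] (⊤ : Subgroup P) = Subgroup.closure (itS A P i) := by
  induction i with
  | zero => simp [itS_zero]
  | succ n ih =>
    rw [Function.iterate_succ_apply', ih]
    exact actComm_closure n

/-- reduce a list with entries in a square-closed set to a nodup one with the same product. -/
lemma nodup_reduce {S : Set P} (hsq : ∀ y ∈ S, y * y ∈ S) :
    ∀ (n : ℕ) (l : List P), l.length = n → (∀ y ∈ l, y ∈ S) →
      ∃ c : List P, c.Nodup ∧ (∀ y ∈ c, y ∈ S) ∧ c.prod = l.prod := by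
  classical
  intro n
  induction n using Nat.strong_induction_on with
  | _ n ih =>
    intro l hlen hmem
    by_cases hnd : l.Nodup
    · exact ⟨l, hnd, hmem, rfl⟩
    · rw [List.nodup_iff_count_le_one] at hnd
      push_neg at hnd
      obtain ⟨y, hy2⟩ := hnd
      have hyl : y ∈ l := List.count_pos_iff.mp (by omega)
      have hyl' : y ∈ l.erase y := by
        rw [← List.count_pos_iff, List.count_erase_self]
        omega
      have hperm : l.Perm (y :: y :: (l.erase y).erase y) :=
        (List.perm_cons_erase hyl).trans
          ((List.perm_cons_erase hyl').cons y)
      set l'' := (l.erase y).erase y with hl''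
      have hlsub : ∀ z ∈ l'', z ∈ l := fun z hz =>
        List.mem_of_mem_erase (List.mem_of_mem_erase hz)
      have hn : n ≠ 0 := by
        rintro rfl
        rw [List.length_eq_zero_iff] at hlen
        subst hlen; simp at hyl
      have hlenl'' : l''.length = n - 2 := by
        have := hperm.length_eq
        simp only [List.length_cons] at this
        omega
      have hn2 : 2 ≤ n := by
        have := hperm.length_eq
        simp only [List.length_cons] at this
        omega
      obtain ⟨c, hc1, hc2, hc3⟩ := ih (n - 1) (by omega) ((y * y) :: l'')
        (by simp [hlenl'']; omega)
        (by
          rintro z hz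
          rcases List.mem_cons.mp hz with rfl | hz
          · exact hsq y (hmem y hyl)
          · exact hmem z (hlsub z hz))
      refine ⟨c, hc1, hc2, ?_⟩
      rw [hc3, hperm.prod_eq]
      simp [mul_assoc]

lemma mem_closure_prod {S : Set P} (hinv : ∀ y ∈ S, y⁻¹ ∈ S) {g : P}
    (hg : g ∈ Subgroup.closure S) :
    ∃ l : List P, (∀ y ∈ l, y ∈ S) ∧ l.prod = g := by
  have h : g ∈ Submonoid.closure (S ∪ S⁻¹) := by
    rw [← Subgroup.closure_toSubmonoid]
    exact hg
  obtain ⟨l, hl, rfl⟩ := Submonoid.exists_list_of_mem_closure h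
  refine ⟨l, fun y hy => ?_, rfl⟩
  rcases hl y hy with h | h
  · exact h
  · simpa using hinv _ h

end Aux

theorem abelian_pGroup_iterated_comm_card_le {P A : Type*} [CommGroup P] [Group A]
    [Finite P] [Finite A] [MulDistribMulAction A P] (p : ℕ) [Fact p.Prime]
    (hP : IsPGroup p P) (hA : ¬ p ∣ Nat.card A)
    (i m : ℕ) (hi : 1 ≤ i) (hm : 1 ≤ m)
    (hcard : {g : P | ∃ (x : P) (l : List A), l.length = i ∧
        g = l.foldl (fun y a => y⁻¹ * a • y) x}.ncard = m) :
    (∀ g ∈ (fun K => actComm A K)^[i] (⊤ : Subgroup P), ∃ c : List P, c.Nodup ∧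
        (∀ y ∈ c, y ∈ {g : P | ∃ (x : P) (l : List A), l.length = i ∧
          g = l.foldl (fun y a => y⁻¹ * a • y) x}) ∧ g = c.prod) ∧
      Nat.card ((fun K => actComm A K)^[i] (⊤ : Subgroup P)) ≤ 2 ^ m := by
  classical
  have hSdef : {g : P | ∃ (x : P) (l : List A), l.length = i ∧
      g = l.foldl (fun y a => y⁻¹ * a • y) x} = itS A P i := rfl
  rw [hSdef] at hcard ⊢
  have key : ∀ g ∈ (fun K => actComm A K)^[i] (⊤ : Subgroup P), ∃ c : List P, c.Nodup ∧
      (∀ y ∈ c, y ∈ itS A P i) ∧ g = c.prod := by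
    intro g hg
    rw [iterate_actComm] at hg
    obtain ⟨l, hl, rfl⟩ := mem_closure_prod (fun y hy => itS_inv hy) hg
    obtain ⟨c, hc1, hc2, hc3⟩ := nodup_reduce (fun y hy => itS_sq hy) l.length l rfl hl
    exact ⟨c, hc1, hc2, hc3.symm⟩
  refine ⟨key, ?_⟩
  -- cardinality bound
  have hSfin : (itS A P i).Finite := Set.toFinite _
  set T : Finset P := hSfin.toFinset with hT
  have hTcard : T.card = m := by
    rw [← hcard, Set.ncard_eq_toFinset_card _ hSfin]
  set H := (fun K => actComm A K)^[i] (⊤ : Subgroup P) with hH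
  have : ∀ g : H, ∃ c : List P, c.Nodup ∧ (∀ y ∈ c, y ∈ itS A P i) ∧ (g : P) = c.prod :=
    fun g => key g g.2
  choose f hf1 hf2 hf3 using this
  have hinj : Function.Injective (fun g : H => (f g).toFinset) := by
    intro g₁ g₂ h
    have hperm : (f g₁).Perm (f g₂) :=
      List.perm_of_nodup_nodup_toFinset_eq (hf1 g₁) (hf1 g₂) h
    have : (f g₁).prod = (f g₂).prod := hperm.prod_eq
    exact Subtype.ext (by rw [hf3 g₁, hf3 g₂, this])
  have hmapsto : ∀ g : H, (f g).toFinset ∈ T.powerset := by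
    intro g
    rw [Finset.mem_powerset]
    intro y hy
    rw [hT, Set.Finite.mem_toFinset]
    exact hf2 g y (List.mem_toFinset.mp hy)
  have hle : Nat.card H ≤ Nat.card {s : Finset P // s ∈ T.powerset} := by
    apply Nat.card_le_card_of_injective (fun g : H => (⟨(f g).toFinset, hmapsto g⟩ :
      {s : Finset P // s ∈ T.powerset}))
    intro g₁ g₂ h
    exact hinj (congrArg Subtype.val h)
  calc Nat.card H ≤ Nat.card {s : Finset P // s ∈ T.powerset} := hle
    _ = T.powerset.card := by rw [Nat.card_eq_fintype_card, Fintype.card_coe]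
    _ = 2 ^ m := by rw [Finset.card_powerset, hTcard]
end

section
/- Let G be a finite group. Then δ*_1(G) = 1 if and only if G is nilpotent, where δ*_1(G) is the subgroup generated by all commutators [a, b] with a, b ∈ G of coprime orders. -/
open scoped commutatorElement

set_option maxHeartbeats 1000000

section Aux

variable {G : Type*} [Group G]

/-- If all coprime-order pairs commute, any element of order coprime to `p` commutes with
every element of the subgroup generated by `p`-elements. -/
lemma aux_central (hcomm : ∀ a b : G, Nat.Coprime (orderOf a) (orderOf b) → Commute a b)
    (p : ℕ) (v : G) (hv : Nat.Coprime (orderOf v) p) :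
    ∀ x ∈ Subgroup.closure {g : G | ∃ k : ℕ, orderOf g = p ^ k}, Commute x v := by
  have hle : Subgroup.closure {g : G | ∃ k : ℕ, orderOf g = p ^ k}
      ≤ Subgroup.centralizer {v} := by
    rw [Subgroup.closure_le]
    rintro s ⟨k, hk⟩
    rw [SetLike.mem_coe, Subgroup.mem_centralizer_iff]
    intro h hh
    rw [Set.mem_singleton_iff] at hh
    subst hh
    have hco : Nat.Coprime (orderOf s) (orderOf h) := by
      rw [hk]; exact hv.symm.pow_left k
    exact ((hcomm s h hco).symm).eq
  intro x hx
  have h2 := hle hx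
  rw [Subgroup.mem_centralizer_iff] at h2
  exact (h2 v (Set.mem_singleton v)).symm

/-- In the direct product of the Sylow subgroups of a finite group, elements of coprime
orders commute. -/
lemma aux_pi_commute [Finite G]
    (x y : ∀ p : (Nat.card G).primeFactors, ∀ P : Sylow p G, (P : Subgroup G))
    (h : Nat.Coprime (orderOf x) (orderOf y)) : Commute x y := by
  show x * y = y * x
  funext p P
  show x p P * y p P = y p P * x p P
  haveI : Fact (Nat.Prime (p : ℕ)) := ⟨Nat.prime_of_mem_primeFactors p.2⟩
  obtain ⟨i, hi⟩ := IsPGroup.iff_orderOf.mp P.2 (x p P)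
  obtain ⟨j, hj⟩ := IsPGroup.iff_orderOf.mp P.2 (y p P)
  have hdvd : ∀ z : ∀ p : (Nat.card G).primeFactors, ∀ P : Sylow p G, (P : Subgroup G),
      orderOf (z p P) ∣ orderOf z := by
    intro z
    have h1 : orderOf (z p P) ∣ orderOf (z p) :=
      orderOf_map_dvd
        (Pi.evalMonoidHom (fun P : Sylow (p : ℕ) G => ((P : Subgroup G) : Type _)) P) (z p)
    have h2 : orderOf (z p) ∣ orderOf z :=
      orderOf_map_dvd
        (Pi.evalMonoidHom
          (fun q : (Nat.card G).primeFactors => ∀ P : Sylow (q : ℕ) G, ((P : Subgroup G) : Type _))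
          p) z
    exact h1.trans h2
  rcases Nat.eq_zero_or_pos i with hi0 | hipos
  · have hx1 : x p P = 1 := by rw [← orderOf_eq_one_iff, hi, hi0, pow_zero]
    rw [hx1, one_mul, mul_one]
  rcases Nat.eq_zero_or_pos j with hj0 | hjpos
  · have hy1 : y p P = 1 := by rw [← orderOf_eq_one_iff, hj, hj0, pow_zero]
    rw [hy1, one_mul, mul_one]
  exfalso
  have hpa : (p : ℕ) ∣ orderOf x := (dvd_pow_self (p : ℕ) hipos.ne').trans (hi ▸ hdvd x)
  have hpb : (p : ℕ) ∣ orderOf y := (dvd_pow_self (p : ℕ) hjpos.ne').trans (hj ▸ hdvd y)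
  have hd1 : (p : ℕ) ∣ 1 := h ▸ Nat.dvd_gcd hpa hpb
  exact (Nat.prime_of_mem_primeFactors p.2).ne_one (Nat.eq_one_of_dvd_one hd1)

end Aux

theorem coprime_commutators_trivial_iff_nilpotent {G : Type*} [Group G] [Finite G] :
    Subgroup.closure
        {g : G | ∃ a b : G, Nat.Coprime (orderOf a) (orderOf b) ∧ g = ⁅a, b⁆} = ⊥ ↔
      Group.IsNilpotent G := by
  constructor
  · intro hcl
    have hcomm : ∀ a b : G, Nat.Coprime (orderOf a) (orderOf b) → Commute a b := by
      intro a b hab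
      rw [← commutatorElement_eq_one_iff_commute]
      have h1 : ⁅a, b⁆ ∈ Subgroup.closure
          {g : G | ∃ a b : G, Nat.Coprime (orderOf a) (orderOf b) ∧ g = ⁅a, b⁆} :=
        Subgroup.subset_closure ⟨a, b, hab, rfl⟩
      rwa [hcl, Subgroup.mem_bot] at h1
    refine ((isNilpotent_of_finite_tfae (G := G)).out 3 0).mp ?_
    intro p hp P
    set S : Set G := {g : G | ∃ k : ℕ, orderOf g = p ^ k} with hS
    set K : Subgroup G := Subgroup.closure S with hK
    -- P is contained in K
    have hPK : (P : Subgroup G) ≤ K := by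
      intro x hx
      refine Subgroup.subset_closure ?_
      obtain ⟨k, hk⟩ := IsPGroup.iff_orderOf.mp P.2 (⟨x, hx⟩ : (P : Subgroup G))
      exact ⟨k, by rwa [Subgroup.orderOf_mk] at hk⟩
    -- K is nilpotent, since K / Z(K) is a p-group
    have hKpq : IsPGroup p (K ⧸ Subgroup.center K) := by
      intro gq
      obtain ⟨g, rfl⟩ := QuotientGroup.mk_surjective gq
      have hn0 : orderOf g ≠ 0 := (orderOf_pos g).ne'
      refine ⟨(orderOf g).factorization p, ?_⟩
      rw [← QuotientGroup.mk_pow, QuotientGroup.eq_one_iff]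
      -- g ^ p ^ k has order coprime to p, hence is central in K
      have hord : Nat.Coprime (orderOf ((g : G) ^ p ^ (orderOf g).factorization p)) p := by
        rw [orderOf_pow, Subgroup.orderOf_coe,
          Nat.gcd_eq_right (Nat.ordProj_dvd (orderOf g) p)]
        exact (Nat.coprime_ordCompl hp.out hn0).symm
      rw [Subgroup.mem_center_iff]
      intro y
      have hcom : Commute (y : G) ((g : G) ^ p ^ (orderOf g).factorization p) :=
        aux_central hcomm p _ hord (y : G) y.2
      exact Subtype.ext (by push_cast; exact hcom.eq)
    have hKnil : Group.IsNilpotent K := of_quotient_center_nilpotent hKpq.isNilpotent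
    -- the Sylow subgroup P, viewed inside K, is normal in K
    set P' : Sylow p K := P.subtype hPK with hP'
    have hP'norm : (P' : Subgroup K).Normal := by
      have htfae : ∀ (q : ℕ) (_hq : Fact q.Prime) (Q : Sylow q K), (Q : Subgroup K).Normal :=
        ((isNilpotent_of_finite_tfae (G := K)).out 0 3).mp hKnil
      exact htfae p hp P'
    -- now show P is normal in G
    constructor
    intro x hx g
    have hn0 : orderOf g ≠ 0 := (orderOf_pos g).ne'
    set k := (orderOf g).factorization p with hk
    set m := orderOf g / p ^ k with hm
    have hnm : p ^ k * m = orderOf g := Nat.ordProj_mul_ordCompl_eq_self (orderOf g) p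
    have hco : Nat.Coprime (p ^ k) m :=
      Nat.Coprime.pow_left k ((Nat.coprime_ordCompl hp.out hn0))
    set A := Nat.gcdA (p ^ k) m with hA
    set B := Nat.gcdB (p ^ k) m with hB
    have hbezout : (1 : ℤ) = (p ^ k : ℕ) * A + (m : ℕ) * B := by
      have hb := Nat.gcd_eq_gcd_ab (p ^ k) m
      rwa [hco, Nat.cast_one] at hb
    set u : G := g ^ ((m : ℤ) * B) with hu
    set v : G := g ^ (((p ^ k : ℕ) : ℤ) * A) with hv
    have hgn : g ^ orderOf g = (1 : G) := pow_orderOf_eq_one g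
    have hvu : v * u = g := by
      rw [hu, hv, ← zpow_add, ← hbezout, zpow_one]
    -- u is a p-element, so u ∈ K
    have huK : u ∈ K := by
      refine Subgroup.subset_closure ?_
      have hupow : u ^ p ^ k = 1 := by
        rw [hu, ← zpow_natCast, ← zpow_mul]
        have he : (m : ℤ) * B * (p ^ k : ℕ) = (orderOf g : ℤ) * B := by
          push_cast [← hnm]; ring
        rw [he, zpow_mul, zpow_natCast, hgn, one_zpow]
      obtain ⟨j, _, hj⟩ := (Nat.dvd_prime_pow hp.out).mp (orderOf_dvd_of_pow_eq_one hupow)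
      exact ⟨j, hj⟩
    -- v has order coprime to p, so v centralizes K
    have hvco : Nat.Coprime (orderOf v) p := by
      have hvpow : v ^ m = 1 := by
        rw [hv, ← zpow_natCast, ← zpow_mul]
        have he : ((p ^ k : ℕ) : ℤ) * A * (m : ℕ) = (orderOf g : ℤ) * A := by
          push_cast [← hnm]; ring
        rw [he, zpow_mul, zpow_natCast, hgn, one_zpow]
      exact Nat.Coprime.coprime_dvd_left (orderOf_dvd_of_pow_eq_one hvpow)
        (Nat.coprime_ordCompl hp.out hn0).symm
    -- u x u⁻¹ ∈ P since P' is normal in K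
    have hxK : x ∈ K := hPK hx
    have hx' : (⟨x, hxK⟩ : K) ∈ (P' : Subgroup K) := by
      rw [hP', Sylow.coe_subtype, Subgroup.mem_subgroupOf]
      exact hx
    have huxu : u * x * u⁻¹ ∈ (P : Subgroup G) := by
      have hc := hP'norm.conj_mem _ hx' ⟨u, huK⟩
      rw [Sylow.coe_subtype, Subgroup.mem_subgroupOf] at hc
      exact hc
    -- v commutes with u x u⁻¹ ∈ K
    have huxuK : u * x * u⁻¹ ∈ K := hPK huxu
    have hcomv : Commute (u * x * u⁻¹) v := aux_central hcomm p v hvco _ huxuK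
    have hfin : g * x * g⁻¹ = u * x * u⁻¹ := by
      rw [← hvu, mul_inv_rev, show v * u * x * (u⁻¹ * v⁻¹) = v * (u * x * u⁻¹) * v⁻¹ by group,
        ← hcomv.eq, mul_inv_cancel_right]
    rwa [hfin]
  · intro hn
    obtain ⟨e⟩ := ((isNilpotent_of_finite_tfae (G := G)).out 0 4).mp hn
    rw [eq_bot_iff, Subgroup.closure_le]
    rintro g ⟨a, b, hab, rfl⟩
    rw [SetLike.mem_coe, Subgroup.mem_bot, commutatorElement_eq_one_iff_commute]
    have hoa : orderOf (e.symm a) = orderOf a :=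
      orderOf_injective e.symm.toMonoidHom e.symm.injective a
    have hob : orderOf (e.symm b) = orderOf b :=
      orderOf_injective e.symm.toMonoidHom e.symm.injective b
    have key : Commute (e.symm a) (e.symm b) :=
      aux_pi_commute _ _ (by rw [hoa, hob]; exact hab)
    have hmap := key.map e.toMonoidHom
    simpa using hmap
end

section
/- Let G be a finite group, P a Sylow p-subgroup of G, N ≤ L two normal subgroups of G, and X a normal subset of G consisting of p-elements. Write bars for images in G/N. If P̄ ∩ L̄ = ⟨P̄ ∩ X̄⟩, then P ∩ L = ⟨P ∩ X, P ∩ N⟩. -/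
open Subgroup
open scoped Pointwise

theorem sylow_inter_eq_closure_of_quotient {G : Type*} [Group G] [Finite G]
    (p : ℕ) [Fact p.Prime] (P : Sylow p G)
    (N L : Subgroup G) [N.Normal] [L.Normal] (hNL : N ≤ L)
    (X : Set G) (hXnorm : ∀ g : G, ∀ x ∈ X, g * x * g⁻¹ ∈ X)
    (hXp : ∀ x ∈ X, ∃ j : ℕ, orderOf x = p ^ j)
    (hbar : (P : Subgroup G).map (QuotientGroup.mk' N) ⊓ L.map (QuotientGroup.mk' N) =
      Subgroup.closure
        (((P : Subgroup G).map (QuotientGroup.mk' N) : Set (G ⧸ N)) ∩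
          (QuotientGroup.mk' N) '' X)) :
    (P : Subgroup G) ⊓ L =
      Subgroup.closure
        (((P : Subgroup G) : Set G) ∩ X ∪ ((P : Subgroup G) : Set G) ∩ (N : Set G)) := by
  set f := QuotientGroup.mk' N with hf
  set R := Subgroup.closure
      (((P : Subgroup G) : Set G) ∩ X ∪ ((P : Subgroup G) : Set G) ∩ (N : Set G)) with hR
  have hRP : R ≤ (P : Subgroup G) := by
    rw [hR, closure_le]
    rintro x (⟨hx, -⟩ | ⟨hx, -⟩) <;> exact hx
  -- key lifting lemma
  have key : ∀ z ∈ ((P : Subgroup G).map f : Set (G ⧸ N)) ∩ f '' X,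
      ∃ y, y ∈ ((P : Subgroup G) : Set G) ∩ X ∧ f y = z := by
    rintro z ⟨hzP, x, hxX, rfl⟩
    obtain ⟨q, hq, hqx⟩ := hzP
    have hxPN : x ∈ (P : Subgroup G) ⊔ N := by
      rw [← SetLike.mem_coe, Subgroup.mul_normal]
      refine ⟨q, hq, q⁻¹ * x, ?_, by group⟩
      show q⁻¹ * x ∈ N
      rw [← QuotientGroup.eq]
      exact hqx
    set K := (P : Subgroup G) ⊔ N with hK
    set xK : K := ⟨x, hxPN⟩ with hxK
    obtain ⟨j, hj⟩ := hXp x hxX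
    have hpg : IsPGroup p (Subgroup.zpowers xK) := by
      refine IsPGroup.of_card (n := j) ?_
      rw [Nat.card_zpowers, Subgroup.orderOf_mk, hj]
    obtain ⟨Q, hQ⟩ := hpg.exists_le_sylow
    obtain ⟨g, hg⟩ := MulAction.exists_smul_eq K Q (P.subtype le_sup_left)
    have hxQ : xK ∈ Q := hQ (Subgroup.mem_zpowers xK)
    have hmem : g * xK * g⁻¹ ∈ (g • Q : Sylow p K) := by
      have h2 := Subgroup.smul_mem_pointwise_smul xK (MulAut.conj g) ↑Q hxQ
      rwa [show (MulAut.conj g) • xK = g * xK * g⁻¹ from rfl,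
        ← Sylow.coe_subgroup_smul] at h2
    rw [hg] at hmem
    have hmem' : (g : G) * x * (g : G)⁻¹ ∈ (P : Subgroup G) := by
      have h3 : g * xK * g⁻¹ ∈ ((P.subtype le_sup_left : Sylow p K) : Subgroup K) := hmem
      rw [Sylow.coe_subtype, Subgroup.mem_subgroupOf] at h3
      simpa using h3
    -- decompose g
    have hgK : (g : G) ∈ ((P : Subgroup G) : Set G) * (N : Set G) := by
      rw [← Subgroup.mul_normal]; exact g.2
    obtain ⟨q', hq', n, hn, hqn⟩ := hgK
    refine ⟨n * x * n⁻¹, ⟨?_, hXnorm n x hxX⟩, ?_⟩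
    · have : n * x * n⁻¹ = q'⁻¹ * ((g : G) * x * (g : G)⁻¹) * q' := by
        rw [← hqn]; group
      rw [this]
      exact mul_mem (mul_mem (inv_mem hq') hmem') hq'
    · show f (n * x * n⁻¹) = f x
      have hn1 : f n = 1 := (QuotientGroup.eq_one_iff n).mpr hn
      simp [map_mul, hn1]
  -- forward inclusion pieces
  have hPXL : ((P : Subgroup G) : Set G) ∩ X ⊆ (L : Set G) := by
    rintro x ⟨hxP, hxX⟩
    have hfx : f x ∈ Subgroup.map f (P : Subgroup G) ⊓ Subgroup.map f L := by
      rw [hbar]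
      exact Subgroup.subset_closure ⟨⟨x, hxP, rfl⟩, ⟨x, hxX, rfl⟩⟩
    have hxL : x ∈ (Subgroup.map f L).comap f := hfx.2
    rwa [Subgroup.comap_map_eq, QuotientGroup.ker_mk', sup_eq_left.mpr hNL] at hxL
  apply le_antisymm
  · -- P ⊓ L ≤ R
    rintro w ⟨hwP, hwL⟩
    have hfw : f w ∈ Subgroup.map f R := by
      have : f w ∈ Subgroup.closure (((P : Subgroup G).map f : Set (G ⧸ N)) ∩ f '' X) := by
        rw [← hbar]; exact ⟨⟨w, hwP, rfl⟩, ⟨w, hwL, rfl⟩⟩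
      refine Subgroup.closure_le (Subgroup.map f R) |>.mpr ?_ this
      rintro z hz
      obtain ⟨y, hy, rfl⟩ := key z hz
      exact ⟨y, Subgroup.subset_closure (Or.inl hy), rfl⟩
    obtain ⟨r, hr, hrw⟩ := hfw
    have hnw : r⁻¹ * w ∈ N := by rw [← QuotientGroup.eq]; exact hrw
    have : r⁻¹ * w ∈ R := Subgroup.subset_closure (Or.inr ⟨mul_mem (inv_mem (hRP hr)) hwP, hnw⟩)
    simpa using mul_mem hr this
  · rw [hR, closure_le]
    rintro x (⟨hxP, hxX⟩ | ⟨hxP, hxN⟩)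
    · exact ⟨hxP, hPXL ⟨hxP, hxX⟩⟩
    · exact ⟨hxP, hNL hxN⟩
end

section
/- Let k ≥ 1 and let G be a finite group in which the set of γ*_k-commutators has exactly m elements. Then |γ*_k(G)| is bounded by a function of m alone (independent of k and G). -/
open scoped commutatorElement

/-- `IsGammaStarComm k g` : `g` is a `γ*_k`-commutator. Every element is a
`γ*_1`-commutator; for `k ≥ 2`, `g` is a `γ*_k`-commutator if `g = ⁅a, b⁆` where `a` is a
power of a `γ*_{k-1}`-commutator, `b ∈ G` and `a`, `b` have coprime orders. -/
def IsGammaStarComm {G : Type*} [Group G] : ℕ → G → Prop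
  | 0, _ => True
  | 1, _ => True
  | (k + 2), g => ∃ a b : G,
      (∃ c : G, IsGammaStarComm (k + 1) c ∧ ∃ n : ℕ, a = c ^ n) ∧
      Nat.Coprime (orderOf a) (orderOf b) ∧ g = ⁅a, b⁆

section Basic
variable {G : Type*} [Group G]

lemma isGSC_conj : ∀ (k : ℕ) (g h : G), IsGammaStarComm k g → IsGammaStarComm k (h * g * h⁻¹)
  | 0, _, _, _ => trivial
  | 1, _, _, _ => trivial
  | (k+2), g, h, ⟨a, b, ⟨c, hc, n, hcn⟩, hcop, hab⟩ =>
    ⟨h * a * h⁻¹, h * b * h⁻¹,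
      ⟨h * c * h⁻¹, isGSC_conj (k+1) c h hc, n, by subst hcn; simp [conj_pow]⟩,
      by
        have e1 : orderOf (h * a * h⁻¹) = orderOf a :=
          (SemiconjBy.orderOf_eq h (by unfold SemiconjBy; group)).symm
        have e2 : orderOf (h * b * h⁻¹) = orderOf b :=
          (SemiconjBy.orderOf_eq h (by unfold SemiconjBy; group)).symm
        rw [e1, e2]; exact hcop,
      by subst hab; simp [commutatorElement_def]; group⟩

lemma isGSC_of_succ : ∀ (k : ℕ) (g : G), IsGammaStarComm (k+1) g → IsGammaStarComm k g
  | 0, _, _ => trivial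
  | 1, _, _ => trivial
  | (k+2), _, ⟨a, b, ⟨c, hc, n, hcn⟩, hcop, hab⟩ =>
    ⟨a, b, ⟨c, isGSC_of_succ (k+1) c hc, n, hcn⟩, hcop, hab⟩

end Basic

namespace GammaStarProof

variable {G : Type*} [Group G] [Finite G] {k m : ℕ}

/-- the set of `γ*_{k+2}`-commutators. -/
abbrev SS (G : Type*) [Group G] (k : ℕ) : Set G := {g : G | IsGammaStarComm (k+2) g}

lemma mem_SS_pow {x : G} (hx : IsGammaStarComm (k+1) x) (i : ℕ) (y : G)
    (h : Nat.Coprime (orderOf (x^i)) (orderOf y)) : ⁅x^i, y⁆ ∈ SS G k :=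
  ⟨x^i, y, ⟨x, hx, i, rfl⟩, h, rfl⟩

lemma conj_mem_SS {g : G} (hg : g ∈ SS G k) (h : G) : h * g * h⁻¹ ∈ SS G k :=
  isGSC_conj _ g h hg

lemma normal_T : (Subgroup.closure (SS G k)).Normal := by
  constructor
  intro n hn g
  refine Subgroup.closure_induction (fun x hx => Subgroup.subset_closure (conj_mem_SS hx g))
    (by simpa using Subgroup.one_mem _) (fun x y _ _ hx hy => ?_) (fun x _ hx => ?_) hn
  · have : g * (x * y) * g⁻¹ = (g * x * g⁻¹) * (g * y * g⁻¹) := by group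
    rw [this]; exact Subgroup.mul_mem _ hx hy
  · have : g * x⁻¹ * g⁻¹ = (g * x * g⁻¹)⁻¹ := by group
    rw [this]; exact Subgroup.inv_mem _ hx

lemma count_lemma (hm : (SS G k).ncard = m) (u y : G)
    (hu : ∀ i : ℕ, ⁅u^i, y⁆ ∈ SS G k) : ∃ n, 0 < n ∧ n ≤ m ∧ Commute (u^n) y := by
  classical
  have hcard : Nat.card (SS G k) = m := hm
  let f : Fin (m+1) → (SS G k) := fun i => ⟨⁅u^(i:ℕ), y⁆, hu _⟩
  have : Fintype (SS G k) := Fintype.ofFinite _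
  have hlt : Fintype.card (SS G k) < Fintype.card (Fin (m+1)) := by
    rw [Fintype.card_fin, ← Nat.card_eq_fintype_card, hcard]; omega
  obtain ⟨i, j, hne, heq⟩ := Fintype.exists_ne_map_eq_of_card_lt f hlt
  have aux : ∀ i j : Fin (m+1), (i:ℕ) < (j:ℕ) → f i = f j →
      ∃ n, 0 < n ∧ n ≤ m ∧ Commute (u^n) y := by
    intro i j hij heq
    have heqv : ⁅u^(i:ℕ), y⁆ = ⁅u^(j:ℕ), y⁆ := congrArg Subtype.val heq
    simp only [commutatorElement_def] at heqv
    have A : u^(i:ℕ) * y * (u^(i:ℕ))⁻¹ = u^(j:ℕ) * y * (u^(j:ℕ))⁻¹ :=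
      mul_right_cancel heqv
    refine ⟨(j:ℕ) - (i:ℕ), by omega, by omega, ?_⟩
    have hd : u^(j:ℕ) = u^(i:ℕ) * u^((j:ℕ)-(i:ℕ)) := by
      rw [← pow_add]; congr 1; omega
    rw [hd] at A
    have h2 : u^(i:ℕ) * (u^((j:ℕ)-(i:ℕ)) * y * (u^((j:ℕ)-(i:ℕ)))⁻¹) * (u^(i:ℕ))⁻¹
        = u^(i:ℕ) * y * (u^(i:ℕ))⁻¹ := by
      rw [A]; group
    have h4 : u^((j:ℕ)-(i:ℕ)) * y * (u^((j:ℕ)-(i:ℕ)))⁻¹ = y :=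
      mul_left_cancel (mul_right_cancel h2)
    have := mul_inv_eq_iff_eq_mul.mp h4
    exact this
  rcases lt_or_gt_of_ne (show (i:ℕ) ≠ (j:ℕ) from fun h => hne (Fin.ext h)) with h | h
  · exact aux i j h heq
  · exact aux j i h heq.symm

variable (G k) in
noncomputable abbrev TT : Subgroup G := Subgroup.closure (SS G k)

instance : (TT G k).Normal := normal_T

instance : (⁅TT G k, TT G k⁆ : Subgroup G).Normal := Subgroup.commutator_normal _ _

lemma commSS {s t : G} (hs : s ∈ SS G k) (ht : t ∈ SS G k) :
    Commute (QuotientGroup.mk' ⁅TT G k, TT G k⁆ s) (QuotientGroup.mk' ⁅TT G k, TT G k⁆ t) := by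
  rw [← commutatorElement_eq_one_iff_commute, ← map_commutatorElement]
  rw [QuotientGroup.mk'_apply, QuotientGroup.eq_one_iff]
  exact Subgroup.commutator_mem_commutator (Subgroup.subset_closure hs)
    (Subgroup.subset_closure ht)

lemma relb (x a b : G) (hxS : x ∈ SS G k) (hSb : ∀ i : ℕ, ⁅a, b^i⁆ ∈ SS G k)
    (hx : x = ⁅a, b⁆) (e : ℕ) (hbe : Commute b (x^e)) :
    (QuotientGroup.mk' ⁅TT G k, TT G k⁆ x) ^ (e * orderOf b) = 1 := by
  set φ := QuotientGroup.mk' ⁅TT G k, TT G k⁆ with hφ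
  have key : ∀ i : ℕ, (φ ⁅a, b^i⁆)^e = (φ x)^(e*i) := by
    intro i; induction i with
    | zero => simp
    | succ i ih =>
      have hGid : ⁅a, b^(i+1)⁆ = ⁅a, b⁆ * (b * ⁅a, b^i⁆ * b⁻¹) := by
        have : b^(i+1) = b * b^i := by rw [pow_succ']
        rw [this]
        simp only [commutatorElement_def]
        group
      have hmem : (b * ⁅a, b^i⁆ * b⁻¹) ∈ SS G k := conj_mem_SS (hSb i) b
      have hcm : Commute (φ x) (φ (b * ⁅a, b^i⁆ * b⁻¹)) := commSS hxS hmem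
      have hfix : b * x^(e*i) * b⁻¹ = x^(e*i) := by
        have : Commute b (x^(e*i)) := by
          rw [pow_mul]; exact hbe.pow_right i
        rw [this.eq]; group
      calc (φ ⁅a, b^(i+1)⁆)^e
          = (φ x * φ (b * ⁅a, b^i⁆ * b⁻¹))^e := by rw [hGid, map_mul, ← hx]
        _ = (φ x)^e * (φ (b * ⁅a, b^i⁆ * b⁻¹))^e := hcm.mul_pow e
        _ = (φ x)^e * (φ b * (φ ⁅a, b^i⁆)^e * (φ b)⁻¹) := by
            rw [map_mul, map_mul, map_inv, conj_pow]
        _ = (φ x)^e * (φ b * (φ x)^(e*i) * (φ b)⁻¹) := by rw [ih]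
        _ = (φ x)^e * φ (b * x^(e*i) * b⁻¹) := by
            rw [map_mul, map_mul, map_inv, map_pow]
        _ = (φ x)^e * (φ x)^(e*i) := by rw [hfix, map_pow]
        _ = (φ x)^(e*(i+1)) := by rw [← pow_add]; ring_nf
  have := key (orderOf b)
  rw [pow_orderOf_eq_one] at this
  have h1 : (⁅a, (1:G)⁆ : G) = 1 := by simp
  rw [h1, map_one, one_pow] at this
  exact this.symm

lemma rela (x a b : G) (hxS : x ∈ SS G k) (hSa : ∀ i : ℕ, ⁅a^i, b⁆ ∈ SS G k)
    (hx : x = ⁅a, b⁆) (e : ℕ) (hae : Commute a (x^e)) :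
    (QuotientGroup.mk' ⁅TT G k, TT G k⁆ x) ^ (e * orderOf a) = 1 := by
  set φ := QuotientGroup.mk' ⁅TT G k, TT G k⁆ with hφ
  have key : ∀ i : ℕ, (φ ⁅a^i, b⁆)^e = (φ x)^(e*i) := by
    intro i; induction i with
    | zero => simp
    | succ i ih =>
      have hGid : ⁅a^(i+1), b⁆ = (a * ⁅a^i, b⁆ * a⁻¹) * ⁅a, b⁆ := by
        have : a^(i+1) = a * a^i := by rw [pow_succ']
        rw [this]
        simp only [commutatorElement_def]
        group
      have hmem : (a * ⁅a^i, b⁆ * a⁻¹) ∈ SS G k := conj_mem_SS (hSa i) a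
      have hcm : Commute (φ (a * ⁅a^i, b⁆ * a⁻¹)) (φ x) := commSS hmem hxS
      have hfix : a * x^(e*i) * a⁻¹ = x^(e*i) := by
        have : Commute a (x^(e*i)) := by
          rw [pow_mul]; exact hae.pow_right i
        rw [this.eq]; group
      calc (φ ⁅a^(i+1), b⁆)^e
          = (φ (a * ⁅a^i, b⁆ * a⁻¹) * φ x)^e := by rw [hGid, map_mul, ← hx]
        _ = (φ (a * ⁅a^i, b⁆ * a⁻¹))^e * (φ x)^e := hcm.mul_pow e
        _ = (φ a * (φ ⁅a^i, b⁆)^e * (φ a)⁻¹) * (φ x)^e := by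
            rw [map_mul, map_mul, map_inv, conj_pow]
        _ = (φ a * (φ x)^(e*i) * (φ a)⁻¹) * (φ x)^e := by rw [ih]
        _ = φ (a * x^(e*i) * a⁻¹) * (φ x)^e := by
            rw [map_mul, map_mul, map_inv, map_pow]
        _ = (φ x)^(e*i) * (φ x)^e := by rw [hfix, map_pow]
        _ = (φ x)^(e*(i+1)) := by rw [← pow_add]; ring_nf
  have := key (orderOf a)
  rw [pow_orderOf_eq_one] at this
  have h1 : (⁅(1:G), b⁆ : G) = 1 := by simp
  rw [h1, map_one, one_pow] at this
  exact this.symm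

lemma core_dvd (hm : (SS G k).ncard = m) {x : G} (hx : x ∈ SS G k) :
    orderOf (QuotientGroup.mk' ⁅TT G k, TT G k⁆ x) ∣ Nat.factorial m := by
  obtain ⟨a, b, ⟨c, hc, n, hcn⟩, hcop, hab⟩ := hx
  have hxS : x ∈ SS G k := ⟨a, b, ⟨c, hc, n, hcn⟩, hcop, hab⟩
  have hx1 : IsGammaStarComm (k+1) x := isGSC_of_succ _ _ hxS
  set φ := QuotientGroup.mk' ⁅TT G k, TT G k⁆ with hφ
  set r := orderOf a with hr
  set q := orderOf b with hq
  have hSb : ∀ i : ℕ, ⁅a, b^i⁆ ∈ SS G k := fun i =>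
    ⟨a, b^i, ⟨c, hc, n, hcn⟩, hcop.coprime_dvd_right (orderOf_pow_dvd i), rfl⟩
  have hSa : ∀ i : ℕ, ⁅a^i, b⁆ ∈ SS G k := fun i =>
    ⟨a^i, b, ⟨c, hc, n*i, by rw [hcn, pow_mul]⟩,
      Nat.Coprime.coprime_dvd_left (orderOf_pow_dvd i) hcop, rfl⟩
  set D := orderOf (φ x) with hD
  have hD0 : D ≠ 0 := by
    have : Finite (G ⧸ (⁅TT G k, TT G k⁆ : Subgroup G)) := Quotient.finite _
    exact (orderOf_pos (φ x)).ne'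
  set o := orderOf x with ho
  have ho0 : o ≠ 0 := (orderOf_pos x).ne'
  have hq0 : q ≠ 0 := (orderOf_pos b).ne'
  have hr0 : r ≠ 0 := (orderOf_pos a).ne'
  rw [← Nat.factorization_le_iff_dvd hD0 (Nat.factorial_ne_zero m)]
  rw [Finsupp.le_def]
  intro p
  by_cases hDp : D.factorization p = 0
  · simp [hDp]
  have hpmem : p ∈ D.primeFactors := by
    rw [← Nat.support_factorization]
    exact Finsupp.mem_support_iff.mpr hDp
  have hp : p.Prime := Nat.prime_of_mem_primeFactors hpmem
  -- the element u := x ^ ord_compl[p] o has p-power order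
  set ec := o / p ^ o.factorization p with hec
  have hec0 : ec ≠ 0 := (Nat.ordCompl_pos p ho0).ne'
  have hecfp : ec.factorization p = 0 := by
    rw [hec, Nat.factorization_ordCompl o p]
    simp
  have hupow : (x^ec)^(p ^ o.factorization p) = 1 := by
    rw [← pow_mul, mul_comm, Nat.ordProj_mul_ordCompl_eq_self o p, ho]
    exact pow_orderOf_eq_one x
  have hord_u : orderOf (x^ec) ∣ p ^ o.factorization p :=
    orderOf_dvd_of_pow_eq_one hupow
  -- two cases according to whether p divides q
  have hn2fact : ∀ n2 : ℕ, 0 < n2 → n2 ≤ m → ∀ pp : ℕ,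
      n2.factorization pp ≤ (Nat.factorial m).factorization pp := by
    intro n2 h1 h2 pp
    have : n2 ∣ Nat.factorial m := Nat.dvd_factorial h1 h2
    exact Finsupp.le_def.mp
      ((Nat.factorization_le_iff_dvd h1.ne' (Nat.factorial_ne_zero m)).mpr this) pp
  by_cases hpq : p ∣ q
  · -- use the a-side; p does not divide r
    have hpr : ¬ p ∣ r := fun hpr => hp.one_lt.ne' (Nat.eq_one_of_dvd_coprimes hcop hpr hpq)
    have hcoprime : ∀ i : ℕ, Nat.Coprime (orderOf ((x^ec)^i)) r := fun i =>
      Nat.Coprime.coprime_dvd_left ((orderOf_pow_dvd i).trans hord_u)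
        (Nat.Coprime.pow_left _ ((Nat.Prime.coprime_iff_not_dvd hp).mpr hpr))
    have hu : ∀ i : ℕ, ⁅(x^ec)^i, a⁆ ∈ SS G k := fun i => by
      rw [← pow_mul]
      exact mem_SS_pow hx1 (ec*i) a (by rw [pow_mul]; exact hcoprime i)
    obtain ⟨n2, hn2pos, hn2le, hcm⟩ := count_lemma hm (x^ec) a hu
    have hae : Commute a (x^(ec*n2)) := by rw [pow_mul]; exact hcm.symm
    have hrel := rela x a b hxS hSa hab (ec*n2) hae
    have hdvd : D ∣ ec * n2 * r := orderOf_dvd_of_pow_eq_one (by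
      rw [mul_assoc] at hrel ⊢; exact hrel)
    have hX0 : ec * n2 * r ≠ 0 := mul_ne_zero (mul_ne_zero hec0 hn2pos.ne') hr0
    have hle := Finsupp.le_def.mp ((Nat.factorization_le_iff_dvd hD0 hX0).mpr hdvd) p
    rw [Nat.factorization_mul (mul_ne_zero hec0 hn2pos.ne') hr0,
      Nat.factorization_mul hec0 hn2pos.ne', Finsupp.add_apply, Finsupp.add_apply,
      hecfp, Nat.factorization_eq_zero_of_not_dvd hpr] at hle
    simp only [zero_add, add_zero] at hle
    exact le_trans hle (hn2fact n2 hn2pos hn2le p)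
  · -- use the b-side
    have hcoprime : ∀ i : ℕ, Nat.Coprime (orderOf ((x^ec)^i)) q := fun i =>
      Nat.Coprime.coprime_dvd_left ((orderOf_pow_dvd i).trans hord_u)
        (Nat.Coprime.pow_left _ ((Nat.Prime.coprime_iff_not_dvd hp).mpr hpq))
    have hu : ∀ i : ℕ, ⁅(x^ec)^i, b⁆ ∈ SS G k := fun i => by
      rw [← pow_mul]
      exact mem_SS_pow hx1 (ec*i) b (by rw [pow_mul]; exact hcoprime i)
    obtain ⟨n2, hn2pos, hn2le, hcm⟩ := count_lemma hm (x^ec) b hu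
    have hbe : Commute b (x^(ec*n2)) := by rw [pow_mul]; exact hcm.symm
    have hrel := relb x a b hxS hSb hab (ec*n2) hbe
    have hdvd : D ∣ ec * n2 * q := orderOf_dvd_of_pow_eq_one (by
      rw [mul_assoc] at hrel ⊢; exact hrel)
    have hX0 : ec * n2 * q ≠ 0 := mul_ne_zero (mul_ne_zero hec0 hn2pos.ne') hq0
    have hle := Finsupp.le_def.mp ((Nat.factorization_le_iff_dvd hD0 hX0).mpr hdvd) p
    rw [Nat.factorization_mul (mul_ne_zero hec0 hn2pos.ne') hq0,
      Nat.factorization_mul hec0 hn2pos.ne', Finsupp.add_apply, Finsupp.add_apply,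
      hecfp, Nat.factorization_eq_zero_of_not_dvd hpq] at hle
    simp only [zero_add, add_zero] at hle
    exact le_trans hle (hn2fact n2 hn2pos hn2le p)

section CommSet
variable {H : Type*} [Group H]

lemma comm_left_center {z : H} (hz : ∀ g, Commute z g) (t1 t2 : H) :
    ⁅z * t1, t2⁆ = ⁅t1, t2⁆ := by
  simp only [commutatorElement_def, mul_inv_rev]
  have h1 : z * t1 * t2 * (t1⁻¹ * z⁻¹) * t2⁻¹ = z * (t1 * t2 * t1⁻¹) * z⁻¹ * t2⁻¹ := by group
  have h2 : z * (t1 * t2 * t1⁻¹) * z⁻¹ = t1 * t2 * t1⁻¹ := by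
    rw [(hz _).eq]; group
  rw [h1, h2]

lemma comm_right_center {z : H} (hz : ∀ g, Commute z g) (t1 t2 : H) :
    ⁅t1, z * t2⁆ = ⁅t1, t2⁆ := by
  simp only [commutatorElement_def, mul_inv_rev]
  have h1 : t1 * (z * t2) * t1⁻¹ * (t2⁻¹ * z⁻¹) = z * (t1 * t2 * t1⁻¹ * t2⁻¹) * z⁻¹ := by
    rw [← mul_assoc t1 z t2, (hz t1).eq.symm]; group
  have h2 : z * (t1 * t2 * t1⁻¹ * t2⁻¹) * z⁻¹ = t1 * t2 * t1⁻¹ * t2⁻¹ := by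
    rw [(hz _).eq]; group
  rw [h1, h2]

lemma card_commutatorSet_le_index_sq [Finite H] :
    Nat.card (commutatorSet H) ≤
      (Subgroup.center H).index * (Subgroup.center H).index := by
  classical
  set Z := Subgroup.center H
  have hsurj : Function.Surjective (fun zz : (H ⧸ Z) × (H ⧸ Z) =>
      (⟨⁅zz.1.out, zz.2.out⁆, zz.1.out, zz.2.out, rfl⟩ : commutatorSet H)) := by
    rintro ⟨w, g1, g2, rfl⟩
    refine ⟨(QuotientGroup.mk g1, QuotientGroup.mk g2), ?_⟩
    apply Subtype.ext
    show ⁅(QuotientGroup.mk g1 : H ⧸ Z).out, (QuotientGroup.mk g2 : H ⧸ Z).out⁆ = ⁅g1, g2⁆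
    have h1 : g1⁻¹ * (QuotientGroup.mk g1 : H ⧸ Z).out ∈ Z :=
      QuotientGroup.eq.mp (QuotientGroup.out_eq' (QuotientGroup.mk g1 : H ⧸ Z)).symm
    have h2 : g2⁻¹ * (QuotientGroup.mk g2 : H ⧸ Z).out ∈ Z :=
      QuotientGroup.eq.mp (QuotientGroup.out_eq' (QuotientGroup.mk g2 : H ⧸ Z)).symm
    have e1 : (QuotientGroup.mk g1 : H ⧸ Z).out = g1 * (g1⁻¹ * (QuotientGroup.mk g1 : H ⧸ Z).out) := by
      group
    have e2 : (QuotientGroup.mk g2 : H ⧸ Z).out = g2 * (g2⁻¹ * (QuotientGroup.mk g2 : H ⧸ Z).out) := by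
      group
    have hz1 : ∀ g, Commute (g1⁻¹ * (QuotientGroup.mk g1 : H ⧸ Z).out) g := fun g =>
      ((Subgroup.mem_center_iff.mp h1 g).symm)
    have hz2 : ∀ g, Commute (g2⁻¹ * (QuotientGroup.mk g2 : H ⧸ Z).out) g := fun g =>
      ((Subgroup.mem_center_iff.mp h2 g).symm)
    rw [e1, e2]
    rw [show g1 * (g1⁻¹ * (QuotientGroup.mk g1 : H ⧸ Z).out)
        = (g1⁻¹ * (QuotientGroup.mk g1 : H ⧸ Z).out) * g1 from (hz1 g1).eq.symm ▸ ((hz1 g1).eq).symm]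
    rw [show g2 * (g2⁻¹ * (QuotientGroup.mk g2 : H ⧸ Z).out)
        = (g2⁻¹ * (QuotientGroup.mk g2 : H ⧸ Z).out) * g2 from ((hz2 g2).eq).symm]
    rw [comm_left_center hz1, comm_right_center hz2]
  have := Nat.card_le_card_of_surjective _ hsurj
  rwa [Nat.card_prod] at this

end CommSet

lemma ccb_mono : Monotone Subgroup.cardCommutatorBound := by
  intro a b h
  unfold Subgroup.cardCommutatorBound
  rcases Nat.eq_zero_or_pos a with rfl | ha
  · rcases Nat.eq_zero_or_pos b with rfl | hb
    · exact le_rfl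
    · have h1 : (1:ℕ) ≤ b ^ (2*b) := Nat.one_le_pow _ _ hb
      calc (0 ^ (2*0):ℕ) ^ (0 ^ (2*0+1) + 1) = 1 := by norm_num
        _ ≤ (b ^ (2*b)) ^ (b ^ (2*b+1) + 1) := Nat.one_le_pow _ _ (by omega)
  · have hbase : a ^ (2*a) ≤ b ^ (2*b) :=
      le_trans (Nat.pow_le_pow_left h _) (Nat.pow_le_pow_right (by omega) (by omega))
    have hexp : a ^ (2*a+1) + 1 ≤ b ^ (2*b+1) + 1 := by
      have : a ^ (2*a+1) ≤ b ^ (2*b+1) :=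
        le_trans (Nat.pow_le_pow_left h _) (Nat.pow_le_pow_right (by omega) (by omega))
      omega
    calc (a ^ (2*a)) ^ (a ^ (2*a+1) + 1) ≤ (b ^ (2*b)) ^ (a ^ (2*a+1) + 1) :=
          Nat.pow_le_pow_left hbase _
      _ ≤ (b ^ (2*b)) ^ (b ^ (2*b+1) + 1) :=
          Nat.pow_le_pow_right (Nat.one_le_pow _ _ (by omega)) hexp

variable (G k) in
/-- conjugation action of `T` on the set `S`. -/
noncomputable def rho : (TT G k) →* Equiv.Perm (SS G k) where
  toFun t :=
    { toFun := fun s => ⟨t.1 * s.1 * t.1⁻¹, conj_mem_SS s.2 t.1⟩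
      invFun := fun s => ⟨t.1⁻¹ * s.1 * t.1, by simpa using conj_mem_SS s.2 t.1⁻¹⟩
      left_inv := by intro s; apply Subtype.ext; simp; group
      right_inv := by intro s; apply Subtype.ext; simp; group }
  map_one' := by ext s; simp
  map_mul' t t' := by
    ext s
    show (t.1 * t'.1) * s.1 * (t.1 * t'.1)⁻¹ = t.1 * (t'.1 * s.1 * t'.1⁻¹) * t.1⁻¹
    group

lemma ker_rho_le_center : (rho G k).ker ≤ Subgroup.center (TT G k) := by
  intro t ht
  rw [Subgroup.mem_center_iff]
  intro g
  have hS : ∀ s : G, s ∈ SS G k → t.1 * s * t.1⁻¹ = s := by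
    intro s hs
    have := Equiv.ext_iff.mp (MonoidHom.mem_ker.mp ht) ⟨s, hs⟩
    exact congrArg Subtype.val this
  have hT : ∀ w ∈ TT G k, t.1 * w = w * t.1 := by
    intro w hw
    refine Subgroup.closure_induction ?_ ?_ ?_ ?_ hw
    · intro s hs
      have := hS s hs
      calc t.1 * s = (t.1 * s * t.1⁻¹) * t.1 := by group
        _ = s * t.1 := by rw [this]
    · simp
    · intro u v _ _ hu hv
      calc t.1 * (u * v) = (t.1 * u) * v := by group
        _ = u * (t.1 * v) := by rw [hu]; group
        _ = (u * v) * t.1 := by rw [hv]; group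
    · intro u _ hu
      calc t.1 * u⁻¹ = u⁻¹ * (u * t.1 * u⁻¹) := by group
        _ = u⁻¹ * (t.1 * u * u⁻¹) := by rw [← hu]
        _ = u⁻¹ * t.1 := by group
  apply Subtype.ext
  exact (hT g.1 g.2).symm

lemma index_center_le (hm : (SS G k).ncard = m) :
    (Subgroup.center (TT G k)).index ≤ Nat.factorial m := by
  classical
  have : Fintype (SS G k) := Fintype.ofFinite _
  have h1 : (Subgroup.center (TT G k)).index ∣ (rho G k).ker.index :=
    Subgroup.index_dvd_of_le ker_rho_le_center
  have h2 : (rho G k).ker.index = Nat.card (rho G k).range := Subgroup.index_ker _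
  have h3 : Nat.card (rho G k).range ≤ Nat.card (Equiv.Perm (SS G k)) :=
    Nat.card_le_card_of_injective _ Subtype.val_injective
  have h4 : Nat.card (Equiv.Perm (SS G k)) = Nat.factorial m := by
    rw [Nat.card_eq_fintype_card, Fintype.card_perm, ← Nat.card_eq_fintype_card,
      show Nat.card (SS G k) = m from hm]
  have hker0 : (rho G k).ker.index ≠ 0 := by
    have : Finite (TT G k) := inferInstance
    exact Subgroup.index_ne_zero_of_finite
  refine le_trans (Nat.le_of_dvd (Nat.pos_of_ne_zero hker0) h1) ?_
  rw [h2]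
  exact le_trans h3 (le_of_eq h4)

lemma commT {s t : G} (hs : s ∈ TT G k) (ht : t ∈ TT G k) :
    Commute (QuotientGroup.mk' ⁅TT G k, TT G k⁆ s) (QuotientGroup.mk' ⁅TT G k, TT G k⁆ t) := by
  rw [← commutatorElement_eq_one_iff_commute, ← map_commutatorElement]
  rw [QuotientGroup.mk'_apply, QuotientGroup.eq_one_iff]
  exact Subgroup.commutator_mem_commutator hs ht

open scoped IsMulCommutative

instance instACommutative :
    IsMulCommutative ((TT G k).map (QuotientGroup.mk' ⁅TT G k, TT G k⁆)) := by
  constructor; constructor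
  rintro ⟨x, hx⟩ ⟨y, hy⟩
  obtain ⟨s, hs, rfl⟩ := Subgroup.mem_map.mp hx
  obtain ⟨t, ht, rfl⟩ := Subgroup.mem_map.mp hy
  apply Subtype.ext
  exact commT hs ht

lemma cardA_le (hm : (SS G k).ncard = m) :
    Nat.card ((TT G k).map (QuotientGroup.mk' ⁅TT G k, TT G k⁆)) ≤ (Nat.factorial m) ^ m := by
  classical
  set E := Nat.factorial m with hE
  have hE0 : 0 < E := Nat.factorial_pos m
  have : Fintype (SS G k) := Fintype.ofFinite _
  have hcardS : Fintype.card (SS G k) = m := by rw [← Nat.card_eq_fintype_card]; exact hm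
  let σ : Fin m ≃ (SS G k) := (Fintype.equivFinOfCardEq hcardS).symm
  let g : Fin m → ((TT G k).map (QuotientGroup.mk' ⁅TT G k, TT G k⁆)) := fun i =>
    ⟨QuotientGroup.mk' ⁅TT G k, TT G k⁆ ((σ i : (SS G k)) : G),
      Subgroup.mem_map_of_mem _ (Subgroup.subset_closure (σ i).2)⟩
  have hgE : ∀ i, (g i) ^ E = 1 := by
    intro i
    apply Subtype.ext
    rw [SubmonoidClass.coe_pow]
    exact orderOf_dvd_iff_pow_eq_one.mp (core_dvd hm (σ i).2)
  have hgE' : ∀ (i : Fin m) (c : ℕ), (g i ^ c) ^ E = 1 := by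
    intro i c
    rw [← pow_mul, mul_comm, pow_mul, hgE, one_pow]
  have key : ∀ z, z ∈ ((TT G k).map (QuotientGroup.mk' ⁅TT G k, TT G k⁆)) →
      ∃ e : Fin m → ℕ, ((∏ i, g i ^ (e i) :
        ((TT G k).map (QuotientGroup.mk' ⁅TT G k, TT G k⁆))) : G ⧸ ⁅TT G k, TT G k⁆) = z := by
    intro z hz
    rw [show ((TT G k).map (QuotientGroup.mk' ⁅TT G k, TT G k⁆))
        = Subgroup.closure ((QuotientGroup.mk' ⁅TT G k, TT G k⁆) '' (SS G k)) from
        MonoidHom.map_closure _ _] at hz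
    refine Subgroup.closure_induction ?_ ?_ ?_ ?_ hz
    · rintro _ ⟨s, hs, rfl⟩
      refine ⟨fun j => if j = σ.symm ⟨s, hs⟩ then 1 else 0, ?_⟩
      have h1 : (∏ i, g i ^ (if i = σ.symm ⟨s, hs⟩ then 1 else 0)) = g (σ.symm ⟨s, hs⟩) := by
        rw [Finset.prod_eq_single (σ.symm ⟨s, hs⟩)]
        · simp
        · intro j _ hj; rw [if_neg hj, pow_zero]
        · intro hmem; exact absurd (Finset.mem_univ _) hmem
      rw [h1]
      show (QuotientGroup.mk' ⁅TT G k, TT G k⁆) ((σ (σ.symm ⟨s, hs⟩) : (SS G k)) : G) = _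
      rw [Equiv.apply_symm_apply]
    · exact ⟨fun _ => 0, by simp⟩
    · rintro y z' _ _ ⟨e1, he1⟩ ⟨e2, he2⟩
      refine ⟨fun i => e1 i + e2 i, ?_⟩
      have h1 : (∏ i, g i ^ (e1 i + e2 i)) = (∏ i, g i ^ e1 i) * (∏ i, g i ^ e2 i) := by
        rw [← Finset.prod_mul_distrib]
        exact Finset.prod_congr rfl (fun i _ => pow_add _ _ _)
      rw [h1, Subgroup.coe_mul, he1, he2]
    · rintro y _ ⟨e, he⟩
      refine ⟨fun i => e i * (E-1), ?_⟩
      have h1 : (∏ i, g i ^ (e i * (E-1))) = (∏ i, g i ^ e i)⁻¹ := by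
        rw [← Finset.prod_inv_distrib]
        refine Finset.prod_congr rfl (fun i _ => ?_)
        rw [pow_mul]
        refine eq_inv_of_mul_eq_one_left ?_
        rw [← pow_succ]
        have hE1 : E - 1 + 1 = E := by omega
        rw [hE1]
        exact hgE' i (e i)
      rw [h1, Subgroup.coe_inv, he]
  let F : (Fin m → Fin E) → ((TT G k).map (QuotientGroup.mk' ⁅TT G k, TT G k⁆)) :=
    fun e => ∏ i, g i ^ ((e i : ℕ))
  have hFsurj : Function.Surjective F := by
    rintro ⟨z, hz⟩
    obtain ⟨e, he⟩ := key z hz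
    refine ⟨fun i => ⟨e i % E, Nat.mod_lt _ hE0⟩, ?_⟩
    apply Subtype.ext
    rw [show F (fun i => ⟨e i % E, Nat.mod_lt _ hE0⟩) = ∏ i, g i ^ (e i % E) from rfl]
    have h1 : (∏ i, g i ^ (e i % E)) = ∏ i, g i ^ (e i) :=
      Finset.prod_congr rfl (fun i _ => (pow_eq_pow_mod (e i) (hgE i)).symm)
    rw [h1, he]
  have hcard := Nat.card_le_card_of_surjective F hFsurj
  have h2 : Nat.card (Fin m → Fin E) = E ^ m := by
    rw [Nat.card_eq_fintype_card, Fintype.card_fun]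
    simp
  rwa [h2] at hcard

lemma cardN_le (hm : (SS G k).ncard = m) :
    Nat.card (⁅TT G k, TT G k⁆ : Subgroup G) ≤
      Subgroup.cardCommutatorBound (Nat.factorial m * Nat.factorial m) := by
  classical
  have hmap : (_root_.commutator (TT G k)).map (TT G k).subtype = ⁅TT G k, TT G k⁆ := by
    rw [_root_.commutator_def, Subgroup.map_commutator]
    congr 1 <;> rw [← MonoidHom.range_eq_map, Subgroup.range_subtype]
  have hcard1 : Nat.card (⁅TT G k, TT G k⁆ : Subgroup G)
      = Nat.card (_root_.commutator (TT G k)) := by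
    rw [← hmap]
    exact (Nat.card_congr
      (Subgroup.equivMapOfInjective _ _ (Subgroup.subtype_injective _)).toEquiv).symm
  rw [hcard1]
  refine le_trans (Subgroup.card_commutator_le_of_finite_commutatorSet (TT G k)) (ccb_mono ?_)
  refine le_trans (card_commutatorSet_le_index_sq (H := (TT G k))) ?_
  exact Nat.mul_le_mul (index_center_le hm) (index_center_le hm)

lemma cardT_le_mul :
    Nat.card (TT G k) ≤
      Nat.card ((TT G k).map (QuotientGroup.mk' ⁅TT G k, TT G k⁆)) *
      Nat.card (⁅TT G k, TT G k⁆ : Subgroup G) := by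
  classical
  set ψ := (QuotientGroup.mk' ⁅TT G k, TT G k⁆).comp (TT G k).subtype with hψ
  have h1 : Nat.card (TT G k) = Nat.card ((TT G k) ⧸ ψ.ker) * Nat.card ψ.ker :=
    Subgroup.card_eq_card_quotient_mul_card_subgroup ψ.ker
  have e1 : Nat.card ((TT G k) ⧸ ψ.ker) = Nat.card ψ.range :=
    Nat.card_congr (QuotientGroup.quotientKerEquivRange ψ).toEquiv
  have e2 : ψ.range = (TT G k).map (QuotientGroup.mk' ⁅TT G k, TT G k⁆) := by
    rw [hψ, MonoidHom.range_comp, Subgroup.range_subtype]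
  have e3 : Nat.card ψ.ker ≤ Nat.card (⁅TT G k, TT G k⁆ : Subgroup G) := by
    refine Nat.card_le_card_of_injective
      (fun t => (⟨t.1.1, (QuotientGroup.eq_one_iff _).mp t.2⟩ :
        (⁅TT G k, TT G k⁆ : Subgroup G))) ?_
    intro u v huv
    apply Subtype.ext; apply Subtype.ext
    have := congrArg (fun w : (⁅TT G k, TT G k⁆ : Subgroup G) => w.1) huv
    exact this
  calc Nat.card (TT G k) = Nat.card ((TT G k) ⧸ ψ.ker) * Nat.card ψ.ker := h1
    _ = Nat.card ((TT G k).map (QuotientGroup.mk' ⁅TT G k, TT G k⁆)) * Nat.card ψ.ker := by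
        rw [e1, e2]
    _ ≤ _ := Nat.mul_le_mul_left _ e3

end GammaStarProof

universe u

/-- Bounded conciseness of coprime `γ*_k`-commutators: the order of `γ*_k(G)` is bounded
in terms of the number `m` of `γ*_k`-commutators alone. -/
theorem gammaStar_boundedly_concise : ∃ f : ℕ → ℕ,
    ∀ (G : Type u) [inst : Group G] [inst2 : Finite G] (k m : ℕ), 1 ≤ k →
      {g : G | IsGammaStarComm k g}.ncard = m →
      Nat.card (Subgroup.closure {g : G | IsGammaStarComm k g}) ≤ f m := by
  classical
  refine ⟨fun m => (Nat.factorial m) ^ m *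
    Subgroup.cardCommutatorBound (Nat.factorial m * Nat.factorial m) + m, ?_⟩
  intro G _ _ k m hk hm
  match k, hk with
  | 1, _ =>
    have huniv : {g : G | IsGammaStarComm 1 g} = Set.univ := by
      ext g; simp [IsGammaStarComm]
    rw [huniv] at hm ⊢
    have hle : Nat.card (Subgroup.closure (Set.univ : Set G)) ≤ Nat.card G :=
      Nat.card_le_card_of_injective _ Subtype.val_injective
    rw [Set.ncard_univ] at hm
    exact le_trans (le_trans hle (le_of_eq hm)) (Nat.le_add_left m _)
  | (k'+2), _ =>
    have hle := GammaStarProof.cardT_le_mul (G := G) (k := k')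
    have hA := GammaStarProof.cardA_le (G := G) (k := k') (m := m) hm
    have hN := GammaStarProof.cardN_le (G := G) (k := k') (m := m) hm
    have : Nat.card (GammaStarProof.TT G k') ≤ (Nat.factorial m) ^ m *
        Subgroup.cardCommutatorBound (Nat.factorial m * Nat.factorial m) :=
      le_trans hle (Nat.mul_le_mul hA hN)
    calc Nat.card (Subgroup.closure {g : G | IsGammaStarComm (k'+2) g})
        = Nat.card (GammaStarProof.TT G k') := rfl
      _ ≤ _ := le_trans this (Nat.le_add_right _ _)
end

section
/- Let k ≥ 0 and let G be a finite group in which the set of δ*_k-commutators has exactly m elements. Then |δ*_k(G)| is bounded by a function of m alone (independent of k and G). -/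
open scoped commutatorElement

/-- `IsDeltaStarComm k g` : `g` is a `δ*_k`-commutator. Every element is a
`δ*_0`-commutator; for `k ≥ 1`, `g` is a `δ*_k`-commutator if `g = ⁅a, b⁆` where `a`, `b`
are powers of `δ*_{k-1}`-commutators of coprime orders. -/
def IsDeltaStarComm {G : Type*} [Group G] : ℕ → G → Prop
  | 0, _ => True
  | (k + 1), g => ∃ a b : G,
      (∃ c : G, IsDeltaStarComm k c ∧ ∃ n : ℕ, a = c ^ n) ∧
      (∃ c : G, IsDeltaStarComm k c ∧ ∃ n : ℕ, b = c ^ n) ∧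
      Nat.Coprime (orderOf a) (orderOf b) ∧ g = ⁅a, b⁆

/-- `δ*_k(G)` : the subgroup generated by all `δ*_k`-commutators. -/
def deltaStar (G : Type*) [Group G] (k : ℕ) : Subgroup G :=
  Subgroup.closure {g : G | IsDeltaStarComm k g}

universe u


namespace DeltaStarAux

variable {G : Type*} [Group G]

/-- powers of `δ*_k`-commutators. -/
def Ypow (k : ℕ) : Set G := {u : G | ∃ c : G, IsDeltaStarComm k c ∧ ∃ n : ℕ, u = c ^ n}

theorem isDSC_one : ∀ k : ℕ, IsDeltaStarComm k (1 : G) := by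
  intro k
  induction k with
  | zero => trivial
  | succ k ih =>
    refine ⟨1, 1, ⟨1, ih, 1, (pow_one 1).symm⟩, ⟨1, ih, 1, (pow_one 1).symm⟩, ?_, by group⟩
    simp [Nat.Coprime]

theorem conj_commutatorElement (y a b : G) :
    y * ⁅a, b⁆ * y⁻¹ = ⁅y * a * y⁻¹, y * b * y⁻¹⁆ := by group

theorem orderOf_conj' (y x : G) : orderOf (y * x * y⁻¹) = orderOf x := by
  have : y * x * y⁻¹ = (MulAut.conj y) x := rfl
  rw [this, MulEquiv.orderOf_eq]

theorem isDSC_conj {k : ℕ} {g : G} (h : IsDeltaStarComm k g) (y : G) :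
    IsDeltaStarComm k (y * g * y⁻¹) := by
  induction k generalizing g y with
  | zero => trivial
  | succ k ih =>
    obtain ⟨a, b, ⟨c, hc, n, hn⟩, ⟨d, hd, n', hn'⟩, hcop, rfl⟩ := h
    refine ⟨y * a * y⁻¹, y * b * y⁻¹, ⟨y * c * y⁻¹, ih hc y, n, by rw [hn]; simp [conj_pow]⟩,
      ⟨y * d * y⁻¹, ih hd y, n', by rw [hn']; simp [conj_pow]⟩, ?_, ?_⟩
    · rwa [orderOf_conj', orderOf_conj']
    · exact conj_commutatorElement y a b

theorem isDSC_inv {k : ℕ} {g : G} (h : IsDeltaStarComm k g) : IsDeltaStarComm k g⁻¹ := by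
  cases k with
  | zero => trivial
  | succ k =>
    obtain ⟨a, b, ha, hb, hcop, rfl⟩ := h
    exact ⟨b, a, hb, ha, hcop.symm, commutatorElement_inv a b⟩

theorem isDSC_mono {k : ℕ} {g : G} (h : IsDeltaStarComm (k + 1) g) : IsDeltaStarComm k g := by
  induction k generalizing g with
  | zero => trivial
  | succ k ih =>
    obtain ⟨a, b, ⟨c, hc, n, hn⟩, ⟨d, hd, n', hn'⟩, hcop, rfl⟩ := h
    exact ⟨a, b, ⟨c, ih hc, n, hn⟩, ⟨d, ih hd, n', hn'⟩, hcop, rfl⟩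

instance deltaStar_normal (k : ℕ) : (deltaStar G k).Normal := by
  constructor
  intro n hn y
  rw [deltaStar] at *
  refine Subgroup.closure_induction ?_ ?_ ?_ ?_ hn
  · intro x hx
    exact Subgroup.subset_closure (isDSC_conj hx y)
  · simpa using (Subgroup.closure _).one_mem
  · intro x z _ _ hx hz
    have : y * (x * z) * y⁻¹ = (y * x * y⁻¹) * (y * z * y⁻¹) := by group
    rw [this]; exact Subgroup.mul_mem _ hx hz
  · intro x _ hx
    have : y * x⁻¹ * y⁻¹ = (y * x * y⁻¹)⁻¹ := by group
    rw [this]; exact Subgroup.inv_mem _ hx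



/-- existence of a CRT projector exponent -/
theorem exists_proj {p : ℕ} (hp : p.Prime) (n : ℕ) (hn : n ≠ 0) :
    ∃ c : ℕ, c ≡ 1 [MOD p ^ n.factorization p] ∧ n / p ^ n.factorization p ∣ c := by
  have hcop : Nat.Coprime (p ^ n.factorization p) (n / p ^ n.factorization p) :=
    (Nat.coprime_ordCompl hp hn).pow_left _
  have hc := (Nat.chineseRemainder hcop 1 0).2
  exact ⟨(Nat.chineseRemainder hcop 1 0).1, hc.1, (Nat.modEq_zero_iff_dvd).1 hc.2⟩

theorem not_dvd_of_modEq_one {p c v : ℕ} (hp : p.Prime) (hv : v ≠ 0)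
    (h1 : c ≡ 1 [MOD p ^ v]) : ¬ p ∣ c := by
  intro hpc
  have h2 : c ≡ 1 [MOD p] := h1.of_dvd (dvd_pow_self p hv)
  have h3 : c % p = 1 % p := h2
  have h4 : c % p = 0 := Nat.eq_zero_of_dvd_of_lt ((Nat.dvd_mod_iff dvd_rfl).2 hpc) (Nat.mod_lt _ hp.pos)
  have h5 : 1 % p = 1 := Nat.mod_eq_of_lt hp.one_lt
  omega

variable {G : Type*} [Group G] [Finite G]

/-- order of the projected power -/
theorem orderOf_pow_proj (x : G) {p : ℕ} (hp : p.Prime) {c : ℕ}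
    (h1 : c ≡ 1 [MOD p ^ (orderOf x).factorization p])
    (h0 : orderOf x / p ^ (orderOf x).factorization p ∣ c) :
    orderOf (x ^ c) = p ^ (orderOf x).factorization p := by
  set n := orderOf x with hn
  have hn0 : n ≠ 0 := (orderOf_pos x).ne'
  set v := n.factorization p with hv
  have hd : p ^ v ∣ n := Nat.ordProj_dvd n p
  have hgcd : n.gcd c = n / p ^ v := by
    apply Nat.dvd_antisymm
    · rcases Nat.eq_zero_or_pos v with hv0 | hvpos
      · rw [hv0, pow_zero, Nat.div_one]; exact Nat.gcd_dvd_left _ _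
      · have hpc : ¬ p ∣ c := not_dvd_of_modEq_one hp hvpos.ne' h1
        have hcop : Nat.Coprime (n.gcd c) (p ^ v) := by
          refine Nat.Coprime.pow_right _ ((Nat.coprime_comm).1 ((hp.coprime_iff_not_dvd).2 ?_))
          exact fun h => hpc (h.trans (Nat.gcd_dvd_right _ _))
        have hdvd : n.gcd c ∣ (n / p ^ v) * p ^ v := by
          rw [Nat.div_mul_cancel hd]; exact Nat.gcd_dvd_left _ _
        exact hcop.dvd_of_dvd_mul_right hdvd
    · exact Nat.dvd_gcd (Nat.div_dvd_of_dvd hd) h0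
  rw [orderOf_pow, ← hn, hgcd, Nat.div_div_self hd hn0]


set_option maxHeartbeats 2000000 in
theorem main_omega (K : ℕ) (a b : G)
    (hbY : b ∈ (Ypow K : Set G))
    (hx : IsDeltaStarComm (K + 1) ⁅a, b⁆)
    (p : ℕ) (hp : p.Prime) (hpb : ¬ p ∣ orderOf b) :
    ∃ ω : G ⧸ ⁅deltaStar G (K+1), deltaStar G (K+1)⁆,
      ((Subgroup.zpowers ω : Set (G ⧸ ⁅deltaStar G (K+1), deltaStar G (K+1)⁆)) ⊆
         (QuotientGroup.mk' ⁅deltaStar G (K+1), deltaStar G (K+1)⁆) ''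
             {g : G | IsDeltaStarComm (K+1) g}) ∧
      (∃ j : ℕ, orderOf ω = p ^ j) ∧
      p ^ ((orderOf ((QuotientGroup.mk' ⁅deltaStar G (K+1), deltaStar G (K+1)⁆) ⁅a, b⁆)).factorization p)
        ∣ orderOf ω := by
  classical
  set H : Subgroup G := deltaStar G (K+1) with hH
  set Hc : Subgroup G := ⁅H, H⁆ with hHcdef
  set π : G →* G ⧸ Hc := QuotientGroup.mk' Hc with hπ
  set S : Set G := {g : G | IsDeltaStarComm (K+1) g} with hSdef
  set M : Subgroup (G ⧸ Hc) := H.map π with hM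
  haveI hMn : M.Normal := (deltaStar_normal (G := G) (K+1)).map π (QuotientGroup.mk'_surjective Hc)
  have hπS : ∀ g : G, g ∈ S → π g ∈ M := by
    intro g hg
    exact ⟨g, Subgroup.subset_closure hg, rfl⟩
  have hcomm : ∀ u v : G ⧸ Hc, u ∈ M → v ∈ M → u * v = v * u := by
    intro u v hu hv
    obtain ⟨h₁, hh₁, rfl⟩ := hu
    obtain ⟨h₂, hh₂, rfl⟩ := hv
    have h1 : π ⁅h₁, h₂⁆ = 1 := by
      rw [hπ]
      rw [QuotientGroup.mk'_apply, QuotientGroup.eq_one_iff]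
      exact Subgroup.commutator_mem_commutator hh₁ hh₂
    rw [map_commutatorElement] at h1
    exact (commutatorElement_eq_one_iff_commute.1 h1).eq
  letI CM : CommGroup ↥M :=
    { (inferInstance : Group ↥M) with
      mul_comm := fun z w => Subtype.ext (hcomm _ _ z.2 w.2) }
  -- the commutator x
  have hxS : ⁅a, b⁆ ∈ S := hx
  have hxH : ⁅a, b⁆ ∈ H := Subgroup.subset_closure hxS
  -- θ : conjugation by π b as an endomorphism of M
  have hconjmem : ∀ z : ↥M, π b * (z : G ⧸ Hc) * (π b)⁻¹ ∈ M := fun z => hMn.conj_mem _ z.2 _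
  set θ : Monoid.End ↥M :=
    { toFun := fun z => ⟨π b * (z : G ⧸ Hc) * (π b)⁻¹, hconjmem z⟩,
      map_one' := by ext : 1; simp
      map_mul' := by
        intro z w
        ext : 1
        show π b * ((z : G ⧸ Hc) * w) * (π b)⁻¹
          = (π b * z * (π b)⁻¹) * (π b * w * (π b)⁻¹)
        group } with hθdef
  have hθcoe : ∀ (i : ℕ) (z : ↥M), (((θ ^ i) z : ↥M) : G ⧸ Hc)
      = (π b) ^ i * (z : G ⧸ Hc) * ((π b) ^ i)⁻¹ := by
    intro i
    induction i with
    | zero => intro z; simp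
    | succ i ih =>
      intro z
      rw [pow_succ]
      show (((θ ^ i) (θ z) : ↥M) : G ⧸ Hc) = _
      rw [ih (θ z)]
      show (π b) ^ i * (π b * z * (π b)⁻¹) * ((π b) ^ i)⁻¹ = _
      rw [pow_succ]
      group
  have hb1 : (π b) ^ orderOf b = 1 := by
    rw [← map_pow, pow_orderOf_eq_one]; exact map_one π
  set β : ℕ := orderOf b with hβdef
  have hβpos : 0 < β := orderOf_pos b
  have hθβ : ∀ z : ↥M, (θ ^ β) z = z := by
    intro z
    ext : 1
    rw [hθcoe, hb1]
    group
  -- x' ∈ M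
  set x' : ↥M := ⟨π ⁅a, b⁆, hπS _ hxS⟩ with hx'def
  -- expansion identity
  have hexp : ∀ n : ℕ, ⁅π a, (π b) ^ n⁆ = ((∏ i ∈ Finset.range n, (θ ^ i) x' : ↥M) : G ⧸ Hc) := by
    intro n
    induction n with
    | zero => simp [commutatorElement_one_right]
    | succ n ih =>
      have key : ⁅π a, (π b) ^ (n+1)⁆
          = ⁅π a, π b⁆ * (π b * ⁅π a, (π b) ^ n⁆ * (π b)⁻¹) := by
        rw [pow_succ']
        group
      rw [key, ih]
      have h2 : π b * ((∏ i ∈ Finset.range n, (θ ^ i) x' : ↥M) : G ⧸ Hc) * (π b)⁻¹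
          = ((θ (∏ i ∈ Finset.range n, (θ ^ i) x') : ↥M) : G ⧸ Hc) := rfl
      rw [h2]
      rw [map_prod]
      have h3 : (∏ i ∈ Finset.range n, θ ((θ ^ i) x')) = ∏ i ∈ Finset.range n, (θ ^ (i+1)) x' := by
        refine Finset.prod_congr rfl ?_
        intro i _
        rw [pow_succ']
        rfl
      rw [h3]
      have h4 : ⁅π a, π b⁆ = (x' : G ⧸ Hc) := (map_commutatorElement π a b).symm
      rw [h4]
      have h5 : (∏ i ∈ Finset.range (n+1), (θ ^ i) x')
          = (∏ i ∈ Finset.range n, (θ ^ (i+1)) x') * (θ ^ 0) x' := Finset.prod_range_succ' _ n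
      rw [h5]
      have h6 : ((∏ i ∈ Finset.range n, (θ ^ (i+1)) x') * (θ ^ 0) x' : ↥M)
          = x' * ∏ i ∈ Finset.range n, (θ ^ (i+1)) x' := by
        rw [pow_zero]
        show (∏ i ∈ Finset.range n, (θ ^ (i+1)) x') * x' = _
        rw [mul_comm]
      rw [h6]
      push_cast
      rfl
  -- star identity
  have hstar : (∏ i ∈ Finset.range β, (θ ^ i) x') = 1 := by
    have h1 : ⁅π a, (π b) ^ β⁆ = 1 := by rw [hb1, commutatorElement_one_right]
    have h2 := hexp β
    rw [h1] at h2
    exact Subtype.ext h2.symm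
  -- order bookkeeping
  set n : ℕ := orderOf ⁅a, b⁆ with hndef
  set v : ℕ := n.factorization p with hvdef
  have hodvd : orderOf (π ⁅a, b⁆) ∣ n := orderOf_map_dvd π ⁅a, b⁆
  have hofact : (orderOf (π ⁅a, b⁆)).factorization p ≤ v := by
    have h1 := (Nat.factorization_le_iff_dvd (orderOf_pos (π ⁅a,b⁆)).ne'
      (orderOf_pos ⁅a,b⁆).ne').2 hodvd
    exact h1 p
  by_cases hv0 : v = 0
  · -- trivial case
    refine ⟨1, ?_, ⟨0, by rw [orderOf_one, pow_zero]⟩, ?_⟩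
    · intro z hz
      rw [Subgroup.zpowers_one_eq_bot] at hz
      have hz1 : z = 1 := hz
      rw [hz1]
      exact ⟨1, isDSC_one _, map_one π⟩
    · have : (orderOf (π ⁅a, b⁆)).factorization p = 0 := le_antisymm (hv0 ▸ hofact) (Nat.zero_le _)
      rw [this, pow_zero, orderOf_one]
  -- nontrivial case
  obtain ⟨c, hc1, hc0⟩ := exists_proj hp n (orderOf_pos ⁅a,b⁆).ne'
  set u₀ : G := ⁅a, b⁆ ^ c with hu₀def
  have hu₀ord : orderOf u₀ = p ^ v := orderOf_pow_proj ⁅a,b⁆ hp hc1 hc0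
  have hu₀H : u₀ ∈ H := pow_mem hxH c
  set w' : ↥M := ⟨π u₀, ⟨u₀, hu₀H, rfl⟩⟩ with hw'def
  have hw'x' : w' = x' ^ c := by
    ext : 1
    show π u₀ = ((x' ^ c : ↥M) : G ⧸ Hc)
    rw [hu₀def, map_pow]
    push_cast
    rfl
  have hw'E1 : w' ^ p ^ v = 1 := by
    ext : 1
    show (π u₀) ^ p ^ v = _
    rw [← map_pow, ← hu₀ord, pow_orderOf_eq_one, map_one]
    rfl
  have hstarw : (∏ i ∈ Finset.range β, (θ ^ i) w') = 1 := by
    rw [hw'x']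
    have h1 : ∀ i ∈ Finset.range β, (θ ^ i) (x' ^ c) = ((θ ^ i) x') ^ c :=
      fun i _ => map_pow _ _ _
    rw [Finset.prod_congr rfl h1, Finset.prod_pow, hstar, one_pow]
  -- the subgroup E
  set E : Subgroup ↥M := Subgroup.closure (Set.range fun i : ℕ => (θ ^ i) w') with hEdef
  have hgenE : ∀ i : ℕ, (θ ^ i) w' ∈ E := fun i => Subgroup.subset_closure ⟨i, rfl⟩
  have hw'E : w' ∈ E := by
    have := hgenE 0
    rwa [pow_zero] at this
  have hsuccapp : ∀ (i : ℕ) (z : ↥M), θ ((θ ^ i) z) = (θ ^ (i+1)) z := by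
    intro i z
    rw [pow_succ']
    rfl
  have hsuccapp2 : ∀ (i : ℕ) (z : ↥M), (θ ^ i) (θ z) = (θ ^ (i+1)) z := by
    intro i z
    rw [pow_succ]
    rfl
  have hθE : ∀ z ∈ E, θ z ∈ E := by
    intro z hz
    refine Subgroup.closure_induction ?_ ?_ ?_ ?_ hz
    · rintro y ⟨i, rfl⟩
      rw [hsuccapp]
      exact hgenE _
    · rw [map_one]; exact one_mem E
    · intro y₁ y₂ _ _ h₁ h₂
      rw [map_mul]; exact mul_mem h₁ h₂
    · intro y _ h₁
      rw [map_inv]; exact inv_mem h₁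
  have hEexp : ∀ z ∈ E, z ^ p ^ v = 1 := by
    intro z hz
    refine Subgroup.closure_induction ?_ ?_ ?_ ?_ hz
    · rintro y ⟨i, rfl⟩
      rw [← map_pow, hw'E1, map_one]
    · rw [one_pow]
    · intro y₁ y₂ _ _ h₁ h₂
      rw [mul_pow, h₁, h₂, mul_one]
    · intro y _ h₁
      rw [inv_pow, h₁, inv_one]
  -- φ
  set φ : ↥M →* ↥M :=
    { toFun := fun z => θ z * z⁻¹,
      map_one' := by show θ 1 * (1 : ↥M)⁻¹ = 1; rw [map_one, inv_one, mul_one],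
      map_mul' := by
        intro z w
        show θ (z * w) * (z * w)⁻¹ = (θ z * z⁻¹) * (θ w * w⁻¹)
        rw [map_mul, mul_inv]
        exact mul_mul_mul_comm _ _ _ _ } with hφdef
  have hφapp : ∀ z : ↥M, φ z = θ z * z⁻¹ := fun z => rfl
  have hφE : ∀ z ∈ E, φ z ∈ E := by
    intro z hz
    rw [hφapp]
    exact mul_mem (hθE z hz) (inv_mem hz)
  -- telescope
  have htel : ∀ y : ↥M, (∏ i ∈ Finset.range β, (θ ^ i) (φ y)) = 1 := by
    intro y
    have h1 : ∀ i ∈ Finset.range β, (θ ^ i) (φ y) = (θ ^ (i+1)) y * ((θ ^ i) y)⁻¹ := by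
      intro i _
      rw [hφapp, map_mul, map_inv, hsuccapp2]
    rw [Finset.prod_congr rfl h1, Finset.prod_mul_distrib, Finset.prod_inv_distrib]
    have hshift : (∏ i ∈ Finset.range β, (θ ^ (i+1)) y) = ∏ i ∈ Finset.range β, (θ ^ i) y := by
      have h5 := Finset.prod_range_succ' (fun i => (θ ^ i) y) β
      have h6 := Finset.prod_range_succ (fun i => (θ ^ i) y) β
      simp only [pow_zero] at h5
      rw [hθβ y] at h6
      have h7 : ((1 : Monoid.End ↥M) y) = y := rfl
      rw [h7] at h5
      rw [h5] at h6
      exact mul_right_cancel h6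
    rw [hshift, mul_inv_cancel]
  -- the norm element vv
  set vv : ↥M := ∏ i ∈ Finset.range β, (θ ^ i) (w' ^ i) with hvvdef
  have hvvE : vv ∈ E := by
    refine Subgroup.prod_mem E ?_
    intro i _
    rw [map_pow]
    exact pow_mem (hgenE i) i
  have hφvv : φ vv = w' ^ β := by
    have hθvv : θ vv = vv * w' ^ β := by
      rw [hvvdef, map_prod]
      have h1 : ∀ i ∈ Finset.range β, θ ((θ ^ i) (w' ^ i))
          = (θ ^ (i+1)) (w' ^ (i+1)) * ((θ ^ (i+1)) w')⁻¹ := by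
        intro i _
        rw [hsuccapp]
        rw [← map_inv, ← map_mul]
        congr 1
        rw [pow_succ, mul_inv_cancel_right]
      rw [Finset.prod_congr rfl h1, Finset.prod_mul_distrib, Finset.prod_inv_distrib]
      have h2 : (∏ i ∈ Finset.range β, (θ ^ (i+1)) w') = 1 := by
        have h3 : ∀ i ∈ Finset.range β, (θ ^ (i+1)) w' = θ ((θ ^ i) w') :=
          fun i _ => (hsuccapp i w').symm
        rw [Finset.prod_congr rfl h3, ← map_prod, hstarw, map_one]
      rw [h2, inv_one, mul_one]
      have h4 := Finset.prod_range_succ' (fun i => (θ ^ i) (w' ^ i)) β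
      have h5 := Finset.prod_range_succ (fun i => (θ ^ i) (w' ^ i)) β
      rw [h5] at h4
      have h6 : ((θ ^ 0) (w' ^ 0) : ↥M) = 1 := by rw [pow_zero, pow_zero]; rfl
      rw [h6, mul_one] at h4
      rw [← h4, hθβ]
    rw [hφapp, hθvv, mul_comm, ← mul_assoc, inv_mul_cancel, one_mul]
  -- inverse of β mod p^v
  have hppow1 : 1 < p ^ v := Nat.one_lt_pow hv0 hp.one_lt
  have hcopβ : Nat.Coprime β (p ^ v) := (((hp.coprime_iff_not_dvd).2 hpb).pow_left v).symm
  obtain ⟨β', -, hβ'⟩ := Nat.exists_mul_mod_eq_one_of_coprime hcopβ hppow1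
  have hpowred : ∀ z : ↥M, z ∈ E → z ^ (β * β') = z := by
    intro z hz
    have h1 : orderOf z ∣ p ^ v := orderOf_dvd_of_pow_eq_one (hEexp z hz)
    have h2 : β * β' ≡ 1 [MOD p ^ v] := by
      show β * β' % p ^ v = 1 % p ^ v
      rw [hβ', Nat.mod_eq_of_lt hppow1]
    have h3 : β * β' ≡ 1 [MOD orderOf z] := h2.of_dvd h1
    have h4 : z ^ (β * β') = z ^ 1 := pow_eq_pow_iff_modEq.2 h3
    rwa [pow_one] at h4
  set V : ↥M := vv ^ β' with hVdef
  have hVE : V ∈ E := pow_mem hvvE β'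
  have hφV : φ V = w' := by
    rw [hVdef, map_pow, hφvv, ← pow_mul]
    exact hpowred w' hw'E
  -- injectivity of φ on φ '' E
  have hinj : ∀ y ∈ E, φ (φ y) = 1 → φ y = 1 := by
    intro y hyE h1
    have hfix : θ (φ y) = φ y := by
      rw [hφapp] at h1
      exact mul_inv_eq_one.1 h1
    have hconst : ∀ i : ℕ, (θ ^ i) (φ y) = φ y := by
      intro i
      induction i with
      | zero => rw [pow_zero]; rfl
      | succ i ih =>
        rw [← hsuccapp2 i (φ y), hfix, ih]
    have hβpow : (φ y) ^ β = 1 := by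
      have h2 := htel y
      have h3 : (∏ i ∈ Finset.range β, (θ ^ i) (φ y)) = (φ y) ^ β := by
        rw [Finset.prod_congr rfl (fun i _ => hconst i), Finset.prod_const, Finset.card_range]
      rw [h3] at h2
      exact h2
    have hppow : (φ y) ^ p ^ v = 1 := hEexp _ (hφE y hyE)
    have ho : orderOf (φ y) ∣ Nat.gcd β (p ^ v) :=
      Nat.dvd_gcd (orderOf_dvd_of_pow_eq_one hβpow) (orderOf_dvd_of_pow_eq_one hppow)
    rw [Nat.Coprime] at hcopβ
    rw [hcopβ, Nat.dvd_one] at ho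
    exact orderOf_eq_one_iff.1 ho
  have hcancelinj : ∀ y₁ y₂ : ↥M, y₁ ∈ E → y₂ ∈ E →
      (∃ Y₁ ∈ E, y₁ = φ Y₁) → (∃ Y₂ ∈ E, y₂ = φ Y₂) → φ y₁ = φ y₂ → y₁ = y₂ := by
    intro y₁ y₂ h₁ h₂ hh1 hh2 heq
    obtain ⟨Y₁, hY₁, rfl⟩ := hh1
    obtain ⟨Y₂, hY₂, rfl⟩ := hh2
    have h3 : φ (φ (Y₁ * Y₂⁻¹)) = 1 := by
      rw [map_mul, map_inv, map_mul, map_inv, heq, mul_inv_cancel]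
    have h4 := hinj _ (mul_mem hY₁ (inv_mem hY₂)) h3
    rw [map_mul, map_inv] at h4
    exact mul_inv_eq_one.1 h4
  -- realization predicate
  set R : ↥M → Prop := fun z => ∃ u : G,
      (∃ e' : ℕ, orderOf u = p ^ e') ∧ u ∈ (Ypow K : Set G) ∧ π u = (z : G ⧸ Hc) with hRdef
  have hRw' : R w' := ⟨u₀, ⟨v, hu₀ord⟩, ⟨⁅a, b⁆, isDSC_mono hx, c, rfl⟩, rfl⟩
  -- commutator with b realizes φ
  have hcommφ : ∀ (z : ↥M) (u : G), π u = (z : G ⧸ Hc) → π ⁅b, u⁆ = ((φ z : ↥M) : G ⧸ Hc) := by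
    intro z u hu
    rw [map_commutatorElement, hu]
    have h1 : ((φ z : ↥M) : G ⧸ Hc) = (π b * (z : G ⧸ Hc) * (π b)⁻¹) * ((z : G ⧸ Hc))⁻¹ := rfl
    rw [h1, commutatorElement_def]
  have hRstep : ∀ z : ↥M, z ∈ E → R z → R (φ z) := by
    rintro z hzE ⟨u, ⟨e', hue⟩, huY, huπ⟩
    have hZ'S : IsDeltaStarComm (K + 1) ⁅b, u⁆ := by
      refine ⟨b, u, hbY, huY, ?_, rfl⟩
      rw [hue]
      exact ((hp.coprime_iff_not_dvd).2 hpb).symm.pow_right e'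
    have hπZ' : π ⁅b, u⁆ = ((φ z : ↥M) : G ⧸ Hc) := hcommφ z u huπ
    obtain ⟨c'', hc''1, hc''0⟩ := exists_proj hp (orderOf ⁅b, u⁆) (orderOf_pos _).ne'
    set u' : G := ⁅b, u⁆ ^ c'' with hu'def
    have hu'ord : orderOf u' = p ^ ((orderOf ⁅b, u⁆).factorization p) :=
      orderOf_pow_proj _ hp hc''1 hc''0
    refine ⟨u', ⟨_, hu'ord⟩, ⟨⁅b, u⁆, isDSC_mono hZ'S, c'', rfl⟩, ?_⟩
    have h1 : π u' = ((φ z : ↥M) : G ⧸ Hc) ^ c'' := by rw [hu'def, map_pow, hπZ']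
    have h2 : ((φ z : ↥M) : G ⧸ Hc) ^ p ^ v = 1 := by
      have h3 : (φ z) ^ p ^ v = 1 := hEexp _ (hφE z hzE)
      have h4 := congrArg (fun t : ↥M => (t : G ⧸ Hc)) h3
      push_cast at h4
      exact h4
    have h4 : orderOf ((φ z : ↥M) : G ⧸ Hc) ∣ p ^ v := orderOf_dvd_of_pow_eq_one h2
    have h5 : orderOf ((φ z : ↥M) : G ⧸ Hc) ∣ orderOf ⁅b, u⁆ := by
      rw [← hπZ']
      exact orderOf_map_dvd π _
    obtain ⟨j, hjle, hj⟩ := (Nat.dvd_prime_pow hp).1 h4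
    have h6 : p ^ j ∣ orderOf ⁅b, u⁆ := hj ▸ h5
    have h7 : j ≤ (orderOf ⁅b, u⁆).factorization p :=
      (hp.pow_dvd_iff_le_factorization (orderOf_pos _).ne').1 h6
    have h9 : c'' ≡ 1 [MOD orderOf ((φ z : ↥M) : G ⧸ Hc)] := by
      rw [hj]
      exact hc''1.of_dvd (pow_dvd_pow p h7)
    rw [h1]
    have h10 : ((φ z : ↥M) : G ⧸ Hc) ^ c'' = ((φ z : ↥M) : G ⧸ Hc) ^ 1 :=
      pow_eq_pow_iff_modEq.2 h9
    rw [h10, pow_one]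
  -- iterates
  set seq : ℕ → ↥M := fun r => φ^[r] w' with hseqdef
  have hiterE : ∀ (r : ℕ) (z : ↥M), z ∈ E → φ^[r] z ∈ E := by
    intro r
    induction r with
    | zero => intro z hz; exact hz
    | succ r ih =>
      intro z hz
      rw [Function.iterate_succ_apply]
      exact ih _ (hφE z hz)
  have hseqE : ∀ r, seq r ∈ E := fun r => hiterE r w' hw'E
  have hseqR : ∀ r, R (seq r) := by
    intro r
    induction r with
    | zero => exact hRw'
    | succ r ih =>
      have h1 : seq (r + 1) = φ (seq r) := Function.iterate_succ_apply' φ r w'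
      rw [h1]
      exact hRstep _ (hseqE r) ih
  have hseqim : ∀ r, ∃ y ∈ E, seq r = φ y := by
    intro r
    refine ⟨φ^[r] V, hiterE r V hVE, ?_⟩
    show φ^[r] w' = φ (φ^[r] V)
    rw [← Function.iterate_succ_apply' φ r V, Function.iterate_succ_apply, hφV]
  haveI : Finite (G ⧸ Hc) := Quotient.finite _
  obtain ⟨r, s, hrs, heq⟩ : ∃ r s : ℕ, r < s ∧ seq r = seq s := by
    obtain ⟨r, s, hne, heq⟩ := Finite.exists_ne_map_eq_of_infinite seq
    rcases lt_or_gt_of_ne hne with h | h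
    · exact ⟨r, s, h, heq⟩
    · exact ⟨s, r, h, heq.symm⟩
  have hcancel : ∀ r s : ℕ, r ≤ s → seq r = seq s → seq 0 = seq (s - r) := by
    intro r
    induction r with
    | zero => intro s _ h; simpa using h
    | succ r ih =>
      intro s hrs h
      obtain ⟨s', rfl⟩ : ∃ s', s = s' + 1 := ⟨s - 1, by omega⟩
      have h1 : seq (r + 1) = φ (seq r) := Function.iterate_succ_apply' φ r w'
      have h2 : seq (s' + 1) = φ (seq s') := Function.iterate_succ_apply' φ s' w'
      rw [h1, h2] at h
      have h3 : seq r = seq s' :=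
        hcancelinj _ _ (hseqE r) (hseqE s') (hseqim r) (hseqim s') h
      have h4 := ih s' (by omega) h3
      rwa [Nat.succ_sub_succ]
  have hkey : w' = seq (s - r) := by
    have := hcancel r s hrs.le heq
    exact this
  set d : ℕ := s - r with hddef
  have hd1 : 1 ≤ d := by omega
  have hwphi : w' = φ (seq (d - 1)) := by
    rw [hkey]
    show seq d = φ (seq (d - 1))
    have : d = (d - 1) + 1 := by omega
    rw [this]
    exact Function.iterate_succ_apply' φ (d - 1) w'
  obtain ⟨ustar, ⟨estar, hustar_ord⟩, hustarY, hustarπ⟩ := hseqR (d - 1)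
  -- conclusion
  refine ⟨(w' : G ⧸ Hc), ?_, ?_, ?_⟩
  · -- zpowers ⊆ π '' S
    intro z hz
    obtain ⟨k, hk⟩ := Subgroup.mem_zpowers_iff.1 hz
    set t : ℕ := orderOf ((w' : ↥M) : G ⧸ Hc) with htdef
    have ht0 : 0 < t := orderOf_pos _
    have hzN : ∃ N : ℕ, ((w' : ↥M) : G ⧸ Hc) ^ N = z := by
      refine ⟨(k % (t : ℤ)).toNat, ?_⟩
      have h1 : ((w' : ↥M) : G ⧸ Hc) ^ ((k % (t : ℤ))) = ((w' : ↥M) : G ⧸ Hc) ^ k :=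
        zpow_mod_orderOf _ k
      have h2 : (0 : ℤ) ≤ k % (t : ℤ) := Int.emod_nonneg k (by exact_mod_cast ht0.ne')
      rw [← zpow_natCast, Int.toNat_of_nonneg h2, h1, hk]
    obtain ⟨N, hN⟩ := hzN
    -- z = π ⁅b, ustar ^ N⁆
    have hSmem : ⁅b, ustar ^ N⁆ ∈ S := by
      show IsDeltaStarComm (K + 1) ⁅b, ustar ^ N⁆
      refine ⟨b, ustar ^ N, hbY, ?_, ?_, rfl⟩
      · obtain ⟨c₀, hc₀, n₀, rfl⟩ := hustarY
        exact ⟨c₀, hc₀, n₀ * N, by rw [pow_mul]⟩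
      · have h1 : orderOf (ustar ^ N) ∣ p ^ estar := by
          rw [← hustar_ord]
          exact orderOf_pow_dvd N
        exact Nat.Coprime.coprime_dvd_right h1 (((hp.coprime_iff_not_dvd).2 hpb).symm.pow_right estar)
    have hπy : π (ustar ^ N) = (((seq (d - 1)) ^ N : ↥M) : G ⧸ Hc) := by
      rw [map_pow, hustarπ]
      push_cast
      rfl
    have hπval : π ⁅b, ustar ^ N⁆ = ((φ ((seq (d - 1)) ^ N) : ↥M) : G ⧸ Hc) :=
      hcommφ _ _ hπy
    have hφpow : φ ((seq (d - 1)) ^ N) = w' ^ N := by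
      rw [map_pow, ← hwphi]
    refine ⟨⁅b, ustar ^ N⁆, hSmem, ?_⟩
    rw [hπval, hφpow, ← hN]
    push_cast
    rfl
  · -- orderOf is a p-power
    have h1 : ((w' : ↥M) : G ⧸ Hc) ^ p ^ v = 1 := by
      have h2 := congrArg (fun t : ↥M => (t : G ⧸ Hc)) hw'E1
      push_cast at h2
      exact h2
    obtain ⟨j, _, hj⟩ := (Nat.dvd_prime_pow hp).1 (orderOf_dvd_of_pow_eq_one h1)
    exact ⟨j, hj⟩
  · -- p ^ e ∣ orderOf ω
    set t : ℕ := orderOf ((w' : ↥M) : G ⧸ Hc) with htdef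
    set e : ℕ := (orderOf (π ⁅a, b⁆)).factorization p with hedef
    rcases Nat.eq_zero_or_pos e with he0 | hepos
    · rw [he0, pow_zero]; exact one_dvd _
    have h1 : (π ⁅a, b⁆) ^ (c * t) = 1 := by
      have h2 : ((w' : ↥M) : G ⧸ Hc) = (π ⁅a, b⁆) ^ c := by
        show π u₀ = _
        rw [hu₀def, map_pow]
      rw [pow_mul, ← h2, pow_orderOf_eq_one]
    have h3 : orderOf (π ⁅a, b⁆) ∣ c * t := orderOf_dvd_of_pow_eq_one h1
    have h4 : p ^ e ∣ c * t := dvd_trans (Nat.ordProj_dvd _ _) h3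
    have hpc : ¬ p ∣ c := not_dvd_of_modEq_one hp hv0 hc1
    have h5 : Nat.Coprime (p ^ e) c := ((hp.coprime_iff_not_dvd).2 hpc).pow_left e
    exact h5.dvd_of_dvd_mul_left h4


section Counting

/-- In a finite commutative group, the subgroup generated by at most `m` elements of
order at most `e` has cardinality at most `e ^ m`. -/
theorem card_closure_le_comm {A : Type*} [CommGroup A] [Finite A] (T : Set A) (e m : ℕ)
    (he : ∀ t ∈ T, orderOf t ≤ e) (he1 : 1 ≤ e) (hTm : T.ncard ≤ m) :
    Nat.card ↥(Subgroup.closure T) ≤ e ^ m := by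
  classical
  have hTfin : T.Finite := Set.toFinite T
  have key : ∀ F : Finset A, (∀ t ∈ F, orderOf t ≤ e) →
      Nat.card ↥(Subgroup.closure (F : Set A)) ≤ e ^ F.card := by
    intro F
    induction F using Finset.induction_on with
    | empty =>
      intro _
      simp only [Finset.coe_empty, Subgroup.closure_empty, Finset.card_empty, pow_zero]
      rw [Subgroup.card_bot]
    | @insert a F ha ih =>
      intro hord
      have h1 : Subgroup.closure ((insert a F : Finset A) : Set A)
          = Subgroup.zpowers a ⊔ Subgroup.closure (F : Set A) := by
        rw [Finset.coe_insert, Set.insert_eq, Subgroup.closure_union, Subgroup.zpowers_eq_closure]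
      have hsurj : Function.Surjective
          (fun yz : ↥(Subgroup.zpowers a) × ↥(Subgroup.closure (F : Set A)) =>
            (⟨(yz.1 : A) * (yz.2 : A),
              h1 ▸ Subgroup.mul_mem _ (Subgroup.mem_sup_left yz.1.2)
                (Subgroup.mem_sup_right yz.2.2)⟩ :
              ↥(Subgroup.closure ((insert a F : Finset A) : Set A)))) := by
        rintro ⟨g, hg⟩
        rw [h1] at hg
        obtain ⟨y, hy, z, hz, hyz⟩ := Subgroup.mem_sup.1 hg
        exact ⟨(⟨y, hy⟩, ⟨z, hz⟩), Subtype.ext hyz⟩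
      have h2 : Nat.card ↥(Subgroup.closure ((insert a F : Finset A) : Set A))
          ≤ Nat.card (↥(Subgroup.zpowers a) × ↥(Subgroup.closure (F : Set A))) :=
        Nat.card_le_card_of_surjective _ hsurj
      rw [Nat.card_prod] at h2
      have h3 : Nat.card ↥(Subgroup.zpowers a) ≤ e := by
        rw [Nat.card_zpowers]
        exact hord a (Finset.mem_insert_self a F)
      have h4 := ih (fun t ht => hord t (Finset.mem_insert_of_mem ht))
      calc Nat.card ↥(Subgroup.closure ((insert a F : Finset A) : Set A))
          ≤ Nat.card ↥(Subgroup.zpowers a) * Nat.card ↥(Subgroup.closure (F : Set A)) := h2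
        _ ≤ e * e ^ F.card := Nat.mul_le_mul h3 h4
        _ = e ^ (insert a F).card := by rw [Finset.card_insert_of_notMem ha, pow_succ, mul_comm]
  have h5 := key hTfin.toFinset (fun t ht => he t (hTfin.mem_toFinset.1 ht))
  rw [Set.Finite.coe_toFinset] at h5
  calc Nat.card ↥(Subgroup.closure T) ≤ e ^ hTfin.toFinset.card := h5
    _ ≤ e ^ m := Nat.pow_le_pow_right (by omega) (by rw [← Set.ncard_eq_toFinset_card T hTfin]; exact hTm)

variable {Q : Type*} [Group Q] [Finite Q]

/-- version for a commutative subgroup of a noncommutative group -/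
theorem card_le_of_gen (M : Subgroup Q) (T : Set Q)
    (hgen : Subgroup.closure T = M)
    (hcomm : ∀ u v : Q, u ∈ M → v ∈ M → u * v = v * u)
    (e m : ℕ) (he : ∀ t ∈ T, orderOf t ≤ e) (he1 : 1 ≤ e) (hTm : T.ncard ≤ m) :
    Nat.card ↥M ≤ e ^ m := by
  classical
  letI CM : CommGroup ↥M :=
    { (inferInstance : Group ↥M) with
      mul_comm := fun z w => Subtype.ext (hcomm _ _ z.2 w.2) }
  have hTM : ∀ t ∈ T, t ∈ M := by
    intro t ht
    rw [← hgen]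
    exact Subgroup.subset_closure ht
  set Tsub : Set ↥M := {z : ↥M | (z : Q) ∈ T} with hTsub
  have himg : (M.subtype) '' Tsub = T := by
    ext t
    constructor
    · rintro ⟨z, hz, rfl⟩; exact hz
    · intro ht; exact ⟨⟨t, hTM t ht⟩, ht, rfl⟩
  have hclos : Subgroup.closure Tsub = (⊤ : Subgroup ↥M) := by
    refine Subgroup.map_injective (M.subtype_injective) ?_
    rw [MonoidHom.map_closure, himg, hgen]
    rw [← MonoidHom.range_eq_map, Subgroup.range_subtype]
  have hord : ∀ z : ↥M, z ∈ Tsub → orderOf z ≤ e := by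
    intro z hz
    rw [← orderOf_injective M.subtype M.subtype_injective z]
    exact he _ hz
  have hcardT : Tsub.ncard ≤ m := by
    refine le_trans ?_ hTm
    refine Set.ncard_le_ncard_of_injOn (fun z => (z : Q)) (fun z hz => hz) ?_ (Set.toFinite _)
    intro z₁ _ z₂ _ h
    exact Subtype.ext h
  have := card_closure_le_comm Tsub e m hord he1 hcardT
  rw [hclos] at this
  calc Nat.card ↥M = Nat.card ↥(⊤ : Subgroup ↥M) := by
        rw [Nat.card_congr Subgroup.topEquiv.toEquiv.symm]
    _ ≤ e ^ m := this

end Counting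



section Central

theorem commutator_mul_left_eq {G : Type*} [Group G] {a b z : G} (h : b * z = z * b) :
    ⁅a * b, z⁆ = ⁅a, z⁆ := by
  have h1 : a * b * z * (a * b)⁻¹ * z⁻¹ = a * (b * z) * (b⁻¹ * a⁻¹) * z⁻¹ := by group
  rw [commutatorElement_def, commutatorElement_def, h1, h]
  group

theorem commutator_mul_right_eq {G : Type*} [Group G] {a b z : G} (h : b * a⁻¹ = a⁻¹ * b) :
    ⁅a, z * b⁆ = ⁅a, z⁆ := by
  have h1 : a * (z * b) * a⁻¹ * (z * b)⁻¹ = a * z * (b * a⁻¹) * (b⁻¹ * z⁻¹) := by group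
  rw [commutatorElement_def, commutatorElement_def, h1, h]
  group

theorem comm_congr {G : Type*} [Group G] {x₁ y₁ x₂ y₂ : G} (C H : Subgroup G)
    (hcent : ∀ z h : G, z ∈ C → h ∈ H → z * h = h * z)
    (hx₁ : x₁ ∈ H) (hy₁ : y₁ ∈ H) (hy₂ : y₂ ∈ H)
    (hc : x₁⁻¹ * x₂ ∈ C) (hd : y₁⁻¹ * y₂ ∈ C) :
    ⁅x₁, y₁⁆ = ⁅x₂, y₂⁆ := by
  have hx2 : x₂ = x₁ * (x₁⁻¹ * x₂) := by group
  have hy2 : y₂ = y₁ * (y₁⁻¹ * y₂) := by group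
  have hddH : y₁⁻¹ * y₂ ∈ H := Subgroup.mul_mem _ (Subgroup.inv_mem _ hy₁) hy₂
  have e1 : (x₁⁻¹ * x₂) * y₁ = y₁ * (x₁⁻¹ * x₂) := hcent _ _ hc hy₁
  have e2 : (x₁⁻¹ * x₂) * (y₁⁻¹ * y₂) = (y₁⁻¹ * y₂) * (x₁⁻¹ * x₂) := by
    have := hcent _ _ hc hddH
    exact this
  have e3 : (y₁⁻¹ * y₂) * x₁⁻¹ = x₁⁻¹ * (y₁⁻¹ * y₂) := by
    have := hcent _ _ hd (Subgroup.inv_mem _ hx₁)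
    exact this
  conv_rhs => rw [hx2, hy2]
  rw [commutator_mul_left_eq (z := y₁ * (y₁⁻¹ * y₂)) ?_, commutator_mul_right_eq e3]
  exact Commute.mul_right e1 e2
  -- note: Commute b z means b * z = z * b

variable {G : Type*} [Group G] [Finite G]

theorem index_centralizer_le (x : G) (S : Set G) (hx : x ∈ S)
    (hconj : ∀ g y : G, g ∈ S → y * g * y⁻¹ ∈ S) :
    (Subgroup.centralizer {x}).index ≤ S.ncard := by
  classical
  set C := Subgroup.centralizer ({x} : Set G) with hC
  have hmemC : ∀ z : G, z ∈ C ↔ x * z = z * x := by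
    intro z
    rw [hC, Subgroup.mem_centralizer_iff]
    simp
  have wd : ∀ a b : G, @Setoid.r G (QuotientGroup.leftRel C) a b →
      (⟨a * x * a⁻¹, hconj x a hx⟩ : ↥S) = ⟨b * x * b⁻¹, hconj x b hx⟩ := by
    intro a b hab
    rw [QuotientGroup.leftRel_apply] at hab
    rw [hmemC] at hab
    refine Subtype.ext ?_
    show a * x * a⁻¹ = b * x * b⁻¹
    calc a * x * a⁻¹ = a * (x * (a⁻¹ * b)) * b⁻¹ := by group
      _ = a * ((a⁻¹ * b) * x) * b⁻¹ := by rw [hab]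
      _ = b * x * b⁻¹ := by group
  set f : G ⧸ C → ↥S := fun q => Quotient.liftOn' q (fun g => ⟨g * x * g⁻¹, hconj x g hx⟩) wd
    with hf
  have hinj : Function.Injective f := by
    intro q₁ q₂ h
    induction q₁ using Quotient.inductionOn'
    induction q₂ using Quotient.inductionOn'
    rename_i a b
    have h2 : a * x * a⁻¹ = b * x * b⁻¹ := congrArg Subtype.val h
    refine Quotient.sound' ?_
    rw [QuotientGroup.leftRel_apply, hmemC]
    calc x * (a⁻¹ * b) = a⁻¹ * (a * x * a⁻¹) * b := by group
      _ = a⁻¹ * (b * x * b⁻¹) * b := by rw [h2]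
      _ = (a⁻¹ * b) * x := by group
  calc (Subgroup.centralizer ({x} : Set G)).index = Nat.card (G ⧸ C) := rfl
    _ ≤ Nat.card ↥S := Nat.card_le_card_of_injective f hinj
    _ = S.ncard := Nat.card_coe_set_eq S

theorem index_iInf_finset_le {ι : Type*} [DecidableEq ι] (F : Finset ι) (f : ι → Subgroup G) :
    (⨅ i ∈ F, f i).index ≤ ∏ i ∈ F, (f i).index := by
  induction F using Finset.induction_on with
  | empty => simp [Subgroup.index_top]
  | @insert a F ha ih =>
    rw [Finset.iInf_insert, Finset.prod_insert ha]
    exact le_trans Subgroup.index_inf_le (Nat.mul_le_mul le_rfl ih)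

theorem card_commutatorSet_le (H C : Subgroup G)
    (hcent : ∀ z h : G, z ∈ C → h ∈ H → z * h = h * z) :
    Nat.card ↥(commutatorSet ↥H) ≤ C.index * C.index := by
  classical
  have hmem : ∀ τ : ↥(commutatorSet ↥H), ∃ g₁ g₂ : ↥H, ⁅g₁, g₂⁆ = τ.1 := fun τ => τ.2
  set f : ↥(commutatorSet ↥H) → (G ⧸ C) × (G ⧸ C) := fun τ =>
    ((QuotientGroup.mk (((hmem τ).choose : ↥H) : G) : G ⧸ C),
     (QuotientGroup.mk (((hmem τ).choose_spec.choose : ↥H) : G) : G ⧸ C)) with hfdef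
  have hinj : Function.Injective f := by
    intro τ₁ τ₂ h
    rw [hfdef] at h
    have h1 : (QuotientGroup.mk (((hmem τ₁).choose : ↥H) : G) : G ⧸ C)
        = QuotientGroup.mk (((hmem τ₂).choose : ↥H) : G) := congrArg Prod.fst h
    have h2 : (QuotientGroup.mk (((hmem τ₁).choose_spec.choose : ↥H) : G) : G ⧸ C)
        = QuotientGroup.mk (((hmem τ₂).choose_spec.choose : ↥H) : G) := congrArg Prod.snd h
    rw [QuotientGroup.eq] at h1 h2
    have h3 : ⁅(((hmem τ₁).choose : ↥H) : G), (((hmem τ₁).choose_spec.choose : ↥H) : G)⁆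
        = ⁅(((hmem τ₂).choose : ↥H) : G), (((hmem τ₂).choose_spec.choose : ↥H) : G)⁆ :=
      comm_congr C H hcent ((hmem τ₁).choose).2 ((hmem τ₁).choose_spec.choose).2
        ((hmem τ₂).choose_spec.choose).2 h1 h2
    have h4 := (hmem τ₁).choose_spec.choose_spec
    have h5 := (hmem τ₂).choose_spec.choose_spec
    refine Subtype.ext ?_
    rw [← h4, ← h5]
    have h6 : ∀ g₁ g₂ : ↥H, ((⁅g₁, g₂⁆ : ↥H) : G) = ⁅(g₁ : G), (g₂ : G)⁆ :=
      fun g₁ g₂ => map_commutatorElement H.subtype g₁ g₂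
    refine Subtype.ext ?_
    rw [h6, h6]
    exact h3
  calc Nat.card ↥(commutatorSet ↥H) ≤ Nat.card ((G ⧸ C) × (G ⧸ C)) :=
        Nat.card_le_card_of_injective f hinj
    _ = C.index * C.index := by rw [Nat.card_prod]; rfl

end Central


theorem cardCommutatorBound_mono {x y : ℕ} (h : x ≤ y) :
    Subgroup.cardCommutatorBound x ≤ Subgroup.cardCommutatorBound y := by
  rcases Nat.eq_zero_or_pos y with hy | hy
  · have hx0 : x = 0 := by omega
    subst hy
    subst hx0
    exact le_rfl
  rcases Nat.eq_zero_or_pos x with hx | hx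
  · subst hx
    have h0 : Subgroup.cardCommutatorBound 0 = 1 := rfl
    rw [h0]
    refine Nat.one_le_iff_ne_zero.2 ?_
    unfold Subgroup.cardCommutatorBound
    positivity
  unfold Subgroup.cardCommutatorBound
  have h1 : x ^ (2 * x) ≤ y ^ (2 * y) :=
    le_trans (Nat.pow_le_pow_left h _) (Nat.pow_le_pow_right hy (by omega))
  have h2 : x ^ (2 * x + 1) + 1 ≤ y ^ (2 * y + 1) + 1 := by
    have h3 : x ^ (2 * x + 1) ≤ y ^ (2 * y + 1) :=
      le_trans (Nat.pow_le_pow_left h (2 * x + 1))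
        (Nat.pow_le_pow_right hy (by omega : 2 * x + 1 ≤ 2 * y + 1))
    omega
  calc (x ^ (2 * x)) ^ (x ^ (2 * x + 1) + 1)
      ≤ (y ^ (2 * y)) ^ (x ^ (2 * x + 1) + 1) := Nat.pow_le_pow_left h1 _
    _ ≤ (y ^ (2 * y)) ^ (y ^ (2 * y + 1) + 1) :=
        Nat.pow_le_pow_right (by positivity) h2

set_option maxHeartbeats 1000000 in
theorem card_deltaStar_succ_le {G : Type*} [Group G] [Finite G] (K m : ℕ)
    (hm : {g : G | IsDeltaStarComm (K + 1) g}.ncard = m) :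
    Nat.card ↥(deltaStar G (K + 1))
      ≤ Subgroup.cardCommutatorBound (m ^ m * m ^ m) * (m ^ m) ^ m := by
  classical
  set S : Set G := {g : G | IsDeltaStarComm (K + 1) g} with hSdef
  set H : Subgroup G := deltaStar G (K + 1) with hH
  set Hc : Subgroup G := ⁅H, H⁆ with hHcdef
  set π : G →* G ⧸ Hc := QuotientGroup.mk' Hc with hπ
  set M : Subgroup (G ⧸ Hc) := H.map π with hM
  have hSfin : S.Finite := Set.toFinite S
  have h1S : (1 : G) ∈ S := isDSC_one _
  have hm1 : 1 ≤ m := by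
    rw [← hm]
    exact (Set.ncard_pos hSfin).2 ⟨1, h1S⟩
  have hconjS : ∀ g y : G, g ∈ S → y * g * y⁻¹ ∈ S := fun g y hg => isDSC_conj hg y
  -- Part (I): the centralizer C
  set Sfin : Finset G := hSfin.toFinset with hSfindef
  have hSfincard : Sfin.card = m := by
    rw [hSfindef, ← Set.ncard_eq_toFinset_card S hSfin, hm]
  set C : Subgroup G := ⨅ x ∈ Sfin, Subgroup.centralizer {x} with hCdef
  have hCidx : C.index ≤ m ^ m := by
    calc C.index ≤ ∏ x ∈ Sfin, (Subgroup.centralizer {x}).index := index_iInf_finset_le _ _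
      _ ≤ m ^ Sfin.card := by
          refine Finset.prod_le_pow_card _ _ _ ?_
          intro x hx
          have := index_centralizer_le x S (hSfin.mem_toFinset.1 hx) hconjS
          rw [hm] at this
          exact this
      _ = m ^ m := by rw [hSfincard]
  have hcentC : ∀ z h : G, z ∈ C → h ∈ H → z * h = h * z := by
    intro z h hz hh
    have hcomm : Commute z h := by
      refine Subgroup.closure_induction ?_ ?_ ?_ ?_ hh
      · intro s hs
        have h1 : z ∈ Subgroup.centralizer {s} := by
          have h2 : C ≤ Subgroup.centralizer {s} := by
            rw [hCdef]
            exact iInf_le_of_le s (iInf_le _ (hSfin.mem_toFinset.2 hs))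
          exact h2 hz
        have h3 := (Subgroup.mem_centralizer_iff.1 h1) s (by simp)
        exact Commute.symm h3
      · exact Commute.one_right z
      · intro h₁ h₂ _ _ c₁ c₂
        exact c₁.mul_right c₂
      · intro h₁ _ c₁
        exact c₁.inv_right
    exact hcomm.eq
  have hcsle : Nat.card ↥(commutatorSet ↥H) ≤ m ^ m * m ^ m :=
    le_trans (card_commutatorSet_le H C hcentC) (Nat.mul_le_mul hCidx hCidx)
  -- Schur
  have hschur : Nat.card ↥(_root_.commutator ↥H)
      ≤ Subgroup.cardCommutatorBound (m ^ m * m ^ m) :=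
    le_trans (Subgroup.card_commutator_le_of_finite_commutatorSet ↥H)
      (cardCommutatorBound_mono hcsle)
  have hHcle : Hc ≤ H := by
    rw [hHcdef]
    rw [Subgroup.commutator_le]
    intro g₁ h₁ g₂ h₂
    exact Subgroup.mul_mem _ (Subgroup.mul_mem _ (Subgroup.mul_mem _ h₁ h₂)
      (Subgroup.inv_mem _ h₁)) (Subgroup.inv_mem _ h₂)
  have hHccard : Nat.card ↥Hc = Nat.card ↥(_root_.commutator ↥H) := by
    have hmap : Subgroup.map H.subtype (_root_.commutator ↥H) = Hc := by
      rw [_root_.commutator_def, Subgroup.map_commutator]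
      rw [← MonoidHom.range_eq_map, Subgroup.range_subtype]
    rw [← hmap]
    exact (Nat.card_congr
      (Subgroup.equivMapOfInjective (_root_.commutator ↥H) H.subtype
        H.subtype_injective).toEquiv).symm
  -- Part (II): order bound for generators of M
  haveI hHn : H.Normal := deltaStar_normal (K + 1)
  haveI hHcn : Hc.Normal := Subgroup.commutator_normal H H
  have horder : ∀ t ∈ π '' S, orderOf t ≤ m ^ m := by
    rintro t ⟨x, hxS, rfl⟩
    have hxw := hxS
    obtain ⟨a, b, haY, hbY, hcop, hxab⟩ := hxw
    set o : ℕ := orderOf (π x) with hodef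
    have ho0 : o ≠ 0 := (orderOf_pos (π x)).ne'
    have hωall : ∀ p ∈ o.primeFactors, ∃ ω : G ⧸ Hc,
        ((Subgroup.zpowers ω : Set (G ⧸ Hc)) ⊆ π '' S) ∧ (∃ j, orderOf ω = p ^ j) ∧
        p ^ (o.factorization p) ∣ orderOf ω := by
      intro p hpo
      have hp : p.Prime := Nat.prime_of_mem_primeFactors hpo
      by_cases hpb : p ∣ orderOf b
      · -- p does not divide orderOf a
        have hpa : ¬ p ∣ orderOf a := by
          intro hpa
          have := Nat.dvd_gcd hpa hpb
          rw [Nat.Coprime] at hcop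
          rw [hcop] at this
          exact hp.one_lt.ne' (Nat.dvd_one.1 this)
        have hx' : IsDeltaStarComm (K + 1) ⁅b, a⁆ := by
          rw [← commutatorElement_inv]
          rw [hSdef, Set.mem_setOf_eq, hxab] at hxS
          exact isDSC_inv hxS
        obtain ⟨ω, hω1, hω2, hω3⟩ := main_omega K b a haY hx' p hp hpa
        refine ⟨ω, hω1, hω2, ?_⟩
        have heq : orderOf ((QuotientGroup.mk' ⁅deltaStar G (K+1), deltaStar G (K+1)⁆) ⁅b, a⁆)
            = o := by
          rw [← commutatorElement_inv, map_inv, orderOf_inv, hodef, hxab]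
        rw [heq] at hω3
        exact hω3
      · have hxS2 : IsDeltaStarComm (K+1) ⁅a, b⁆ := by
          rw [hSdef, Set.mem_setOf_eq, hxab] at hxS
          exact hxS
        obtain ⟨ω, hω1, hω2, hω3⟩ := main_omega K a b hbY hxS2 p hp hpb
        refine ⟨ω, hω1, hω2, ?_⟩
        have heq : orderOf ((QuotientGroup.mk' ⁅deltaStar G (K+1), deltaStar G (K+1)⁆) ⁅a, b⁆)
            = o := by
          rw [hodef, hxab]
        rw [heq] at hω3
        exact hω3
    have himgle : (π '' S).ncard ≤ m := by
      rw [← hm]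
      exact Set.ncard_image_le hSfin
    have hfacle : ∀ p ∈ o.primeFactors, p ^ (o.factorization p) ≤ m := by
      intro p hpo
      obtain ⟨ω, hω1, hω2, hω3⟩ := hωall p hpo
      refine le_trans (Nat.le_of_dvd (orderOf_pos ω) hω3) ?_
      calc orderOf ω = Nat.card ↥(Subgroup.zpowers ω) := (Nat.card_zpowers ω).symm
        _ = (Subgroup.zpowers ω : Set (G ⧸ Hc)).ncard := Nat.card_coe_set_eq _
        _ ≤ (π '' S).ncard := Set.ncard_le_ncard hω1 (Set.toFinite _)
        _ ≤ m := himgle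
    -- number of prime factors is at most m
    set gω : ℕ → G ⧸ Hc := fun p =>
      if h : p ∈ o.primeFactors then (hωall p h).choose else 1 with hgω
    have hinj : Set.InjOn gω ↑o.primeFactors := by
      intro p hp' q hq' heq
      rw [Finset.mem_coe] at hp' hq'
      have hp : p.Prime := Nat.prime_of_mem_primeFactors hp'
      have hq : q.Prime := Nat.prime_of_mem_primeFactors hq'
      rw [hgω] at heq
      simp only [dif_pos hp', dif_pos hq'] at heq
      obtain ⟨_, ⟨jp, hjp⟩, hdp⟩ := (hωall p hp').choose_spec
      obtain ⟨_, ⟨jq, hjq⟩, hdq⟩ := (hωall q hq').choose_spec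
      have hep : 1 ≤ o.factorization p :=
        hp.factorization_pos_of_dvd ho0 (Nat.mem_primeFactors.1 hp').2.1
      have hjp1 : 1 ≤ jp := by
        by_contra hcon
        have hjp0 : jp = 0 := by omega
        rw [hjp0, pow_zero] at hjp
        rw [hjp, Nat.dvd_one] at hdp
        have := Nat.one_lt_pow (Nat.one_le_iff_ne_zero.1 hep) hp.one_lt
        omega
      have heqord : (p : ℕ) ^ jp = q ^ jq := by
        rw [← hjp, ← hjq, heq]
      have hpq : p ∣ q ^ jq := by
        rw [← heqord]
        exact dvd_pow_self p (by omega)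
      exact (Nat.prime_dvd_prime_iff_eq hp hq).1 (hp.dvd_of_dvd_pow hpq)
    have hcardpf : o.primeFactors.card ≤ m := by
      have h1 : (gω '' ↑o.primeFactors).ncard = o.primeFactors.card := by
        rw [Set.ncard_image_of_injOn hinj, Set.ncard_coe_finset]
      have h2 : gω '' ↑o.primeFactors ⊆ π '' S := by
        rintro _ ⟨p, hp', rfl⟩
        rw [Finset.mem_coe] at hp'
        rw [hgω]
        simp only [dif_pos hp']
        obtain ⟨hsub, _, _⟩ := (hωall p hp').choose_spec
        exact hsub (Subgroup.mem_zpowers _)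
      rw [← h1]
      exact le_trans (Set.ncard_le_ncard h2 (Set.toFinite _)) himgle
    -- o = product of prime powers
    have hoprod : o = ∏ p ∈ o.primeFactors, p ^ (o.factorization p) := by
      conv_lhs => rw [← Nat.factorization_prod_pow_eq_self ho0]
      rfl
    calc orderOf (π x) = o := rfl
      _ = ∏ p ∈ o.primeFactors, p ^ (o.factorization p) := hoprod
      _ ≤ m ^ o.primeFactors.card := Finset.prod_le_pow_card _ _ _ hfacle
      _ ≤ m ^ m := Nat.pow_le_pow_right (by omega) hcardpf
  -- apply the counting lemma
  have hgen : Subgroup.closure (π '' S) = M := by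
    rw [hM]
    exact (MonoidHom.map_closure π S).symm
  have hcommM : ∀ u v : G ⧸ Hc, u ∈ M → v ∈ M → u * v = v * u := by
    intro u v hu hv
    obtain ⟨h₁, hh₁, rfl⟩ := hu
    obtain ⟨h₂, hh₂, rfl⟩ := hv
    have h1 : π ⁅h₁, h₂⁆ = 1 := by
      rw [hπ, QuotientGroup.mk'_apply, QuotientGroup.eq_one_iff]
      exact Subgroup.commutator_mem_commutator hh₁ hh₂
    rw [map_commutatorElement] at h1
    exact (commutatorElement_eq_one_iff_commute.1 h1).eq
  have hMcard : Nat.card ↥M ≤ (m ^ m) ^ m := by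
    refine card_le_of_gen M (π '' S) hgen hcommM (m ^ m) m horder ?_ ?_
    · exact Nat.one_le_pow _ _ (by omega)
    · rw [← hm]
      exact Set.ncard_image_le hSfin
  -- Part (III): combine
  have hHcquot : Nat.card ↥H = Nat.card (↥H ⧸ Hc.subgroupOf H) * Nat.card ↥(Hc.subgroupOf H) :=
    Subgroup.card_eq_card_quotient_mul_card_subgroup _
  have hsub : Nat.card ↥(Hc.subgroupOf H) = Nat.card ↥Hc :=
    Nat.card_congr (Subgroup.subgroupOfEquivOfLe hHcle).toEquiv
  have hquotM : Nat.card (↥H ⧸ Hc.subgroupOf H) = Nat.card ↥M := by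
    set φh : ↥H →* G ⧸ Hc := π.comp H.subtype with hφh
    have hker : φh.ker = Hc.subgroupOf H := by
      ext z
      rw [MonoidHom.mem_ker, hφh, MonoidHom.comp_apply]
      rw [Subgroup.mem_subgroupOf]
      rw [hπ, QuotientGroup.mk'_apply, QuotientGroup.eq_one_iff]
      rfl
    have hrange : φh.range = M := by
      ext q
      constructor
      · rintro ⟨z, rfl⟩
        exact ⟨(z : G), z.2, rfl⟩
      · rintro ⟨g, hg, rfl⟩
        exact ⟨⟨g, hg⟩, rfl⟩
    have heq1 : Nat.card (↥H ⧸ φh.ker) = Nat.card ↥φh.range :=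
      Nat.card_congr (QuotientGroup.quotientKerEquivRange φh).toEquiv
    have heq2 : Nat.card (↥H ⧸ φh.ker) = Nat.card (↥H ⧸ Hc.subgroupOf H) :=
      congrArg (fun N : Subgroup ↥H => Nat.card (↥H ⧸ N)) hker
    have heq3 : Nat.card ↥φh.range = Nat.card ↥M :=
      congrArg (fun N : Subgroup (G ⧸ Hc) => Nat.card ↥N) hrange
    rw [← heq2, heq1, heq3]
  calc Nat.card ↥H = Nat.card (↥H ⧸ Hc.subgroupOf H) * Nat.card ↥(Hc.subgroupOf H) := hHcquot
    _ = Nat.card ↥M * Nat.card ↥Hc := by rw [hsub, hquotM]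
    _ ≤ (m ^ m) ^ m * Subgroup.cardCommutatorBound (m ^ m * m ^ m) := by
        refine Nat.mul_le_mul hMcard ?_
        rw [hHccard]
        exact hschur
    _ = Subgroup.cardCommutatorBound (m ^ m * m ^ m) * (m ^ m) ^ m := by ring

end DeltaStarAux

open DeltaStarAux in
/-- Bounded conciseness of coprime `δ*_k`-commutators: the order of `δ*_k(G)` is bounded
in terms of the number `m` of `δ*_k`-commutators alone. -/
theorem deltaStar_boundedly_concise : ∃ f : ℕ → ℕ,
    ∀ (G : Type u) [inst : Group G] [inst2 : Finite G] (k m : ℕ),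
      {g : G | IsDeltaStarComm k g}.ncard = m →
      Nat.card (deltaStar G k) ≤ f m := by
  refine ⟨fun m => m + Subgroup.cardCommutatorBound (m ^ m * m ^ m) * (m ^ m) ^ m, ?_⟩
  intro G _ _ k m hm
  cases k with
  | zero =>
    have hS : {g : G | IsDeltaStarComm 0 g} = Set.univ := by
      ext g
      simp only [Set.mem_setOf_eq, Set.mem_univ, iff_true]
      trivial
    have h1 : Nat.card ↥(deltaStar G 0) ≤ Nat.card G :=
      Nat.card_le_card_of_injective _ (deltaStar G 0).subtype_injective
    have h2 : Nat.card G = m := by rw [← hm, hS, Set.ncard_univ]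
    exact le_trans (h2 ▸ h1) (Nat.le_add_right m _)
  | succ K =>
    have h1 := card_deltaStar_succ_le K m hm
    exact le_trans h1 (Nat.le_add_left _ _)
end

section
/- Let G be a finite metanilpotent group, H a Hall p′-subgroup of G, P the Sylow p-subgroup of γ_∞(G), and k ≥ 2. Then every iterated commutator [x, h₁, …, h_{k−1}] with x ∈ P and h₁, …, h_{k−1} ∈ H is a γ*_k-commutator of G. -/
open scoped commutatorElement

/-- The nilpotent residual `γ_∞(G)`. -/
def gammaInf (G : Type*) [Group G] : Subgroup G := ⨅ n, Subgroup.lowerCentralSeries (⊤ : Subgroup G) n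

/-- A group is metanilpotent if it has a nilpotent normal subgroup with nilpotent quotient. -/
def IsMetanilpotent (G : Type*) [Group G] : Prop :=
  ∃ (N : Subgroup G) (hN : N.Normal), Group.IsNilpotent ↥N ∧
    (letI := hN; Group.IsNilpotent (G ⧸ N))

theorem iterated_comm_isGammaStarComm {G : Type*} [Group G] [Finite G]
    (p : ℕ) [Fact p.Prime] (hmeta : IsMetanilpotent G)
    (H : Subgroup G) (hH1 : ¬ p ∣ Nat.card H) (hH2 : ∃ a : ℕ, H.index = p ^ a)
    (P : Sylow p ↥(gammaInf G)) (k : ℕ) (hk : 2 ≤ k)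
    (x : G) (hx : x ∈ (P : Subgroup ↥(gammaInf G)).map (gammaInf G).subtype)
    (l : List G) (hlen : l.length = k - 1) (hl : ∀ h ∈ l, h ∈ H) :
    IsGammaStarComm k (l.foldl (fun z y => ⁅z, y⁆) x) := by
  set PG : Subgroup G := (P : Subgroup ↥(gammaInf G)).map (gammaInf G).subtype with hPGdef
  -- `γ∞(G)` is normal in `G`
  haveI hnorm : (gammaInf G).Normal := by
    constructor
    intro n hn g
    simp only [gammaInf, Subgroup.mem_iInf] at hn ⊢
    exact fun i => (Subgroup.lowerCentralSeries_normal ⊤ i).conj_mem n (hn i) g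
  -- `γ∞(G)` is nilpotent
  haveI hnilp : Group.IsNilpotent ↥(gammaInf G) := by
    obtain ⟨N, hN, hN1, hN2⟩ := hmeta
    haveI := hN
    haveI := hN1
    have hle : gammaInf G ≤ N := by
      obtain ⟨n, hn⟩ := Subgroup.nilpotent_iff_lowerCentralSeries.mp hN2
      have h1 : gammaInf G ≤ Subgroup.lowerCentralSeries ⊤ n := iInf_le _ n
      refine h1.trans ?_
      intro g hg
      have : (QuotientGroup.mk' N) g ∈ Subgroup.lowerCentralSeries (⊤ : Subgroup (G ⧸ N)) n := by
        rw [← Subgroup.map_top_of_surjective (QuotientGroup.mk' N) (QuotientGroup.mk'_surjective N),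
          ← Subgroup.map_lowerCentralSeries]
        exact ⟨g, hg, rfl⟩
      rw [hn, Subgroup.mem_bot] at this
      simpa [QuotientGroup.ker_mk'] using (QuotientGroup.eq_one_iff g).mp this
    exact nilpotent_of_mulEquiv (Subgroup.subgroupOfEquivOfLe hle)
  -- `P` is normal in `γ∞(G)`, hence characteristic, hence `PG` is normal in `G`
  haveI hPnormal : (P : Subgroup ↥(gammaInf G)).Normal :=
    Sylow.normal_of_normalizerCondition (normalizerCondition_of_isNilpotent) P
  haveI hPchar : (P : Subgroup ↥(gammaInf G)).Characteristic :=
    Sylow.characteristic_of_normal P hPnormal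
  haveI hPGnorm : PG.Normal := ConjAct.normal_of_characteristic_of_normal
  -- elements of `PG` have `p`-power order
  have hord : ∀ z ∈ PG, ∃ n : ℕ, orderOf z = p ^ n := by
    rintro z ⟨y, hy, rfl⟩
    obtain ⟨n, hn⟩ := P.2 ⟨y, hy⟩
    have hdvd : orderOf (⟨y, hy⟩ : (P : Subgroup ↥(gammaInf G))) ∣ p ^ n :=
      orderOf_dvd_of_pow_eq_one hn
    obtain ⟨m, _, hm⟩ := (Nat.dvd_prime_pow (Fact.out (p := p.Prime))).mp hdvd
    refine ⟨m, ?_⟩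
    rw [orderOf_injective (gammaInf G).subtype Subtype.coe_injective y,
      ← Subgroup.orderOf_mk (H := (P : Subgroup ↥(gammaInf G))) y hy, hm]
  -- elements of `H` have order coprime to `p`
  have hcop : ∀ z ∈ PG, ∀ h ∈ H, Nat.Coprime (orderOf z) (orderOf h) := by
    intro z hz h hh
    obtain ⟨n, hn⟩ := hord z hz
    rw [hn]
    refine Nat.Coprime.pow_left n (((Fact.out (p := p.Prime)).coprime_iff_not_dvd).mpr ?_)
    intro hdvd
    exact hH1 (hdvd.trans (H.orderOf_dvd_natCard hh))
  -- `PG` is closed under commutators with arbitrary elements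
  have hcomm : ∀ z ∈ PG, ∀ g : G, ⁅z, g⁆ ∈ PG := by
    intro z hz g
    have h1 : z⁻¹ ∈ PG := PG.inv_mem hz
    have h2 : g * z * g⁻¹ ∈ PG := hPGnorm.conj_mem z hz g
    have : ⁅z, g⁆ = z * (g * z⁻¹ * g⁻¹) := by
      rw [commutatorElement_def]; group
    rw [this]
    exact PG.mul_mem hz (hPGnorm.conj_mem _ h1 g)
  have hfold : ∀ (l : List G) (z : G), z ∈ PG → l.foldl (fun z y => ⁅z, y⁆) z ∈ PG := by
    intro l
    induction l with
    | nil => intro z hz; exact hz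
    | cons h t ih => intro z hz; exact ih _ (hcomm z hz h)
  -- main induction
  have main : ∀ (l : List G), (∀ h ∈ l, h ∈ H) → ∀ z ∈ PG, l ≠ [] →
      IsGammaStarComm (l.length + 1) (l.foldl (fun z y => ⁅z, y⁆) z) := by
    intro l
    induction l using List.reverseRecOn with
    | nil => intro _ z _ hne; exact absurd rfl hne
    | append_singleton t h ih =>
      intro hmem z hz _
      have hh : h ∈ H := hmem h (by simp)
      have hth : ∀ a ∈ t, a ∈ H := fun a ha => hmem a (by simp [ha])
      have hw : t.foldl (fun z y => ⁅z, y⁆) z ∈ PG := hfold t z hz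
      rw [List.foldl_append]
      simp only [List.foldl_cons, List.foldl_nil, List.length_append, List.length_singleton]
      rcases Nat.eq_zero_or_pos t.length with h0 | hpos
      · -- t = [], so this is IsGammaStarComm 2 ⁅z, h⁆
        rw [List.length_eq_zero_iff] at h0
        subst h0
        simp only [List.foldl_nil, List.length_nil]
        exact ⟨z, h, ⟨z, trivial, 1, (pow_one z).symm⟩, hcop z hz h hh, rfl⟩
      · obtain ⟨m, hm⟩ : ∃ m, t.length = m + 1 := ⟨t.length - 1, (Nat.succ_pred_eq_of_pos hpos).symm⟩
        have hW : IsGammaStarComm (t.length + 1) (t.foldl (fun z y => ⁅z, y⁆) z) :=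
          ih hth z hz (by intro h'; subst h'; simp at hm)
        set w := t.foldl (fun z y => ⁅z, y⁆) z
        rw [hm]
        exact ⟨w, h, ⟨w, by rw [← hm]; exact hW, 1, (pow_one w).symm⟩,
          hcop w hw h hh, rfl⟩
  -- conclude
  have hne : l ≠ [] := by
    intro h'
    subst h'
    simp at hlen
    omega
  have := main l hl x hx hne
  rwa [hlen, Nat.sub_add_cancel (le_trans (by norm_num) hk)] at this
end

section
/- Let G be a finite group, N a normal subgroup of G, and suppose the image of x ∈ G in G/N is a δ*_k-commutator of G/N. Then there exists a δ*_k-commutator y of G such that x ∈ yN. -/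
open scoped commutatorElement

private lemma pow_lift_aux {G H : Type*} [Group G] [Group H] [Finite G] (f : G →* H) (g : G) :
    ∃ e : ℕ, f (g ^ e) = f g ∧
      ∀ p : ℕ, p.Prime → p ∣ orderOf (g ^ e) → p ∣ orderOf (f g) := by
  set m := orderOf g with hm_def
  set r := orderOf (f g) with hr_def
  have hm : m ≠ 0 := (orderOf_pos g).ne'
  have hrm : r ∣ m := orderOf_map_dvd f g
  have hr0 : r ≠ 0 := fun h => hm (Nat.eq_zero_of_zero_dvd (h ▸ hrm))
  set u := m.gcd (r ^ m) with hu_def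
  have hum : u ∣ m := Nat.gcd_dvd_left _ _
  have hu0 : u ≠ 0 := fun h => hm (Nat.eq_zero_of_gcd_eq_zero_left h)
  set v := m / u with hv_def
  have huv : u * v = m := Nat.mul_div_cancel' hum
  have hv0 : v ≠ 0 := by
    intro h; rw [h, mul_zero] at huv; exact hm huv.symm
  have hprime_u : ∀ p : ℕ, p.Prime → p ∣ u → p ∣ r := fun p hp hdvd =>
    hp.dvd_of_dvd_pow (hdvd.trans (Nat.gcd_dvd_right _ _))
  have hru : r ∣ u := Nat.dvd_gcd hrm (dvd_pow_self r hm)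
  have hcop : Nat.Coprime u v := by
    rw [Nat.coprime_iff_gcd_eq_one]
    by_contra hne
    set p := (Nat.gcd u v).minFac with hp_def
    have hp := Nat.minFac_prime hne
    have hpu : p ∣ u := (Nat.minFac_dvd _).trans (Nat.gcd_dvd_left _ _)
    have hpv : p ∣ v := (Nat.minFac_dvd _).trans (Nat.gcd_dvd_right _ _)
    have hpr : p ∣ r := hprime_u p hp hpu
    have h1 : v.factorization p = m.factorization p - u.factorization p := by
      rw [hv_def, Nat.factorization_div hum, Finsupp.tsub_apply]
    have h2 : u.factorization p = min (m.factorization p) (m * r.factorization p) := by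
      rw [hu_def, Nat.factorization_gcd hm (pow_ne_zero _ hr0), Nat.factorization_pow,
        Finsupp.inf_apply, Finsupp.smul_apply, smul_eq_mul]
    have h3 : m.factorization p ≤ m * r.factorization p := by
      have hr1 : 1 ≤ r.factorization p := hp.factorization_pos_of_dvd hr0 hpr
      calc m.factorization p ≤ m := le_of_lt (Nat.factorization_lt p hm)
        _ ≤ m * r.factorization p := Nat.le_mul_of_pos_right _ hr1
    have h4 : 0 < v.factorization p := hp.factorization_pos_of_dvd hv0 hpv
    omega
  obtain ⟨e, he1, he0⟩ := Nat.chineseRemainder hcop 1 0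
  have hve : v ∣ e := (Nat.modEq_zero_iff_dvd).mp he0
  have horder : orderOf (g ^ e) ∣ u := by
    apply orderOf_dvd_of_pow_eq_one
    rw [← pow_mul, ← orderOf_dvd_iff_pow_eq_one, ← hm_def, ← huv]
    exact (mul_comm e u) ▸ mul_dvd_mul_left u hve
  refine ⟨e, ?_, fun p hp hdvd => hprime_u p hp (hdvd.trans horder)⟩
  have her : e ≡ 1 [MOD r] := he1.of_dvd hru
  rw [map_pow]
  calc (f g) ^ e = (f g) ^ 1 := pow_eq_pow_iff_modEq.mpr her
    _ = f g := pow_one _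

private lemma coprime_of_primes {a b ra rb : ℕ} (_ha : a ≠ 0)
    (hpa : ∀ p : ℕ, p.Prime → p ∣ a → p ∣ ra) (hpb : ∀ p : ℕ, p.Prime → p ∣ b → p ∣ rb)
    (hcop : Nat.Coprime ra rb) : Nat.Coprime a b := by
  rw [Nat.coprime_iff_gcd_eq_one]
  by_contra hne
  have hp := Nat.minFac_prime hne
  set p := (Nat.gcd a b).minFac
  have hpa' : p ∣ ra := hpa p hp ((Nat.minFac_dvd _).trans (Nat.gcd_dvd_left _ _))
  have hpb' : p ∣ rb := hpb p hp ((Nat.minFac_dvd _).trans (Nat.gcd_dvd_right _ _))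
  have h1 : p ∣ 1 := hcop ▸ Nat.dvd_gcd hpa' hpb'
  exact Nat.Prime.one_lt hp |>.ne' (Nat.dvd_one.mp h1)

/-- `δ*_k`-commutators lift along quotient maps. -/
theorem deltaStarComm_lift {G : Type*} [Group G] [Finite G] (N : Subgroup G) [N.Normal]
    (k : ℕ) (x : G) (h : IsDeltaStarComm k ((QuotientGroup.mk' N) x)) :
    ∃ y : G, IsDeltaStarComm k y ∧ y⁻¹ * x ∈ N := by
  induction k generalizing x with
  | zero => exact ⟨x, trivial, by simp [N.one_mem]⟩
  | succ k ih =>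
    obtain ⟨abar, bbar, ⟨cbar, hc, n, han⟩, ⟨dbar, hd, m, hbm⟩, hcop, hx⟩ := h
    obtain ⟨c₀, rfl⟩ := QuotientGroup.mk'_surjective N cbar
    obtain ⟨d₀, rfl⟩ := QuotientGroup.mk'_surjective N dbar
    obtain ⟨c, hck, hcN⟩ := ih c₀ hc
    obtain ⟨d, hdk, hdN⟩ := ih d₀ hd
    have hcq : (QuotientGroup.mk' N) c = (QuotientGroup.mk' N) c₀ := by
      rw [QuotientGroup.mk'_eq_mk']
      exact ⟨c⁻¹ * c₀, hcN, by group⟩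
    have hdq : (QuotientGroup.mk' N) d = (QuotientGroup.mk' N) d₀ := by
      rw [QuotientGroup.mk'_eq_mk']
      exact ⟨d⁻¹ * d₀, hdN, by group⟩
    obtain ⟨e, hea, hep⟩ := pow_lift_aux (QuotientGroup.mk' N) (c ^ n)
    obtain ⟨e', heb, hep'⟩ := pow_lift_aux (QuotientGroup.mk' N) (d ^ m)
    set a := (c ^ n) ^ e with ha_def
    set b := (d ^ m) ^ e' with hb_def
    have haq : (QuotientGroup.mk' N) a = abar := by
      rw [hea, map_pow, hcq, ← han]
    have hbq : (QuotientGroup.mk' N) b = bbar := by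
      rw [heb, map_pow, hdq, ← hbm]
    have hqa : (QuotientGroup.mk' N) (c ^ n) = abar := by
      rw [map_pow, hcq, ← han]
    have hqb : (QuotientGroup.mk' N) (d ^ m) = bbar := by
      rw [map_pow, hdq, ← hbm]
    have hcop' : Nat.Coprime (orderOf a) (orderOf b) := by
      refine coprime_of_primes (orderOf_pos a).ne'
        (fun p hp hd => ?_) (fun p hp hd => ?_) hcop
      · exact hqa ▸ hep p hp hd
      · exact hqb ▸ hep' p hp hd
    refine ⟨⁅a, b⁆, ⟨a, b, ⟨c, hck, n * e, by rw [pow_mul]⟩,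
      ⟨d, hdk, m * e', by rw [pow_mul]⟩, hcop', rfl⟩, ?_⟩
    have : (QuotientGroup.mk' N) ⁅a, b⁆ = (QuotientGroup.mk' N) x := by
      rw [map_commutatorElement, haq, hbq, ← hx]
    rw [QuotientGroup.mk'_eq_mk'] at this
    obtain ⟨z, hz, hzeq⟩ := this
    rwa [show ⁅a, b⁆⁻¹ * x = z from by rw [← hzeq]; group]
end

section
/- Let G be a finite group, and suppose that the set X of γ*_k-commutators of G is finite with |X| = m. Then the derived subgroup of γ*_k(G) has m-bounded order. -/
open scoped commutatorElement

universe u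

section Aux

variable {G : Type*} [Group G]

/-- `γ*_k`-commutators are preserved by automorphisms. -/
lemma isGammaStarComm_map (e : G ≃* G) :
    ∀ (k : ℕ) (g : G), IsGammaStarComm k g → IsGammaStarComm k (e g)
  | 0, _, _ => trivial
  | 1, _, _ => trivial
  | (k + 2), g, ⟨a, b, ⟨c, hc, n, hn⟩, hcop, hg⟩ =>
    ⟨e a, e b, ⟨e c, isGammaStarComm_map e (k + 1) c hc, n, by rw [hn, map_pow]⟩,
      by rwa [e.orderOf_eq, e.orderOf_eq],
      by rw [hg, map_commutatorElement]⟩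

/-- The conjugation action of `G` on a conjugation-invariant subset, as a homomorphism to
the permutation group. -/
def conjPermHom (S : Set G) (hS : ∀ (g : G), ∀ x ∈ S, g * x * g⁻¹ ∈ S) :
    G →* Equiv.Perm S where
  toFun g :=
    { toFun := fun x => ⟨g * x * g⁻¹, hS g x x.2⟩
      invFun := fun x => ⟨g⁻¹ * x * g, by simpa using hS g⁻¹ x x.2⟩
      left_inv := fun x => by ext; simp [mul_assoc]
      right_inv := fun x => by ext; simp [mul_assoc] }
  map_one' := by ext x; simp
  map_mul' g h := by ext x; simp [mul_assoc]

/-- Commutators only depend on cosets modulo the center. -/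
lemma commutatorElement_mul_center (a b z w : G)
    (hz : z ∈ Subgroup.center G) (hw : w ∈ Subgroup.center G) :
    ⁅a * z, b * w⁆ = ⁅a, b⁆ := by
  rw [Subgroup.mem_center_iff] at hz hw
  have hzA : ∀ g h : G, g * (z * h) = z * (g * h) := fun g h => by
    rw [← mul_assoc, hz, mul_assoc]
  have hziA : ∀ g h : G, g * (z⁻¹ * h) = z⁻¹ * (g * h) := fun g h => by
    rw [← mul_assoc, (Commute.inv_right (hz g)).eq, mul_assoc]
  have hwA : ∀ g h : G, g * (w * h) = w * (g * h) := fun g h => by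
    rw [← mul_assoc, hw, mul_assoc]
  have hwiA : ∀ g h : G, g * (w⁻¹ * h) = w⁻¹ * (g * h) := fun g h => by
    rw [← mul_assoc, (Commute.inv_right (hw g)).eq, mul_assoc]
  simp only [commutatorElement_def, mul_inv_rev, mul_assoc]
  simp only [hziA]
  simp only [hzA]
  simp only [hwiA]
  simp only [hwA]
  simp only [inv_mul_cancel_left, mul_inv_cancel_left]

/-- The number of commutators is at most the square of the index of the center. -/
lemma card_commutatorSet_le_index_center_sq (K : Type*) [Group K] [Finite K] :
    Nat.card (commutatorSet K) ≤ (Subgroup.center K).index ^ 2 := by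
  set Z := Subgroup.center K
  have hsurj : Function.Surjective
      (fun p : (K ⧸ Z) × (K ⧸ Z) => (⟨⁅p.1.out, p.2.out⁆, commutator_mem_commutatorSet _ _⟩ :
        commutatorSet K)) := by
    rintro ⟨g, a, b, rfl⟩
    refine ⟨(QuotientGroup.mk a, QuotientGroup.mk b), Subtype.ext ?_⟩
    obtain ⟨z, hz⟩ := QuotientGroup.mk_out_eq_mul Z a
    obtain ⟨w, hw⟩ := QuotientGroup.mk_out_eq_mul Z b
    show ⁅(QuotientGroup.mk a : K ⧸ Z).out, (QuotientGroup.mk b : K ⧸ Z).out⁆ = ⁅a, b⁆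
    rw [hz, hw]
    exact commutatorElement_mul_center a b z w z.2 w.2
  calc Nat.card (commutatorSet K) ≤ Nat.card ((K ⧸ Z) × (K ⧸ Z)) :=
        Nat.card_le_card_of_surjective _ hsurj
    _ = Z.index ^ 2 := by rw [Nat.card_prod, sq]; rfl

/-- Monotonicity of the Schur bound. -/
lemma cardCommutatorBound_mono {a b : ℕ} (h : a ≤ b) :
    Subgroup.cardCommutatorBound a ≤ Subgroup.cardCommutatorBound b := by
  rcases Nat.eq_zero_or_pos b with rfl | hb
  · interval_cases a <;> simp [Subgroup.cardCommutatorBound]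
  unfold Subgroup.cardCommutatorBound
  have key : ∀ i j : ℕ, i ≤ j → a ^ i ≤ b ^ j := by
    intro i j hij
    rcases Nat.eq_zero_or_pos a with rfl | ha
    · calc (0:ℕ) ^ i ≤ 1 := by rcases i with _ | i <;> simp
        _ ≤ b ^ j := Nat.one_le_pow _ _ hb
    · exact (Nat.pow_le_pow_left h i).trans (Nat.pow_le_pow_right hb hij)
  calc (a ^ (2 * a)) ^ (a ^ (2 * a + 1) + 1)
      ≤ (b ^ (2 * b)) ^ (a ^ (2 * a + 1) + 1) :=
        Nat.pow_le_pow_left (key _ _ (by omega)) _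
    _ ≤ (b ^ (2 * b)) ^ (b ^ (2 * b + 1) + 1) :=
        Nat.pow_le_pow_right (Nat.one_le_pow _ _ hb)
          (by have := key (2 * a + 1) (2 * b + 1) (by omega); omega)

end Aux

/-- The derived subgroup of `γ*_k(G)` has `m`-bounded order when there are exactly `m`
`γ*_k`-commutators. -/
theorem commutator_gammaStar_bounded : ∃ f : ℕ → ℕ,
    ∀ (G : Type u) [inst : Group G] [inst2 : Finite G] (k m : ℕ), 1 ≤ k →
      {g : G | IsGammaStarComm k g}.ncard = m →
      Nat.card (commutator ↥(Subgroup.closure {g : G | IsGammaStarComm k g})) ≤ f m := by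
  classical
  refine ⟨fun m => Subgroup.cardCommutatorBound (m.factorial ^ 2), ?_⟩
  intro G _ _ k m hk hm
  set X : Set G := {g : G | IsGammaStarComm k g} with hXdef
  set H : Subgroup G := Subgroup.closure X with hHdef
  -- X is invariant under conjugation
  have hX : ∀ (g : G), ∀ x ∈ X, g * x * g⁻¹ ∈ X := by
    intro g x hx
    have := isGammaStarComm_map (MulAut.conj g) k x hx
    simpa [hXdef] using this
  set φ : G →* Equiv.Perm X := conjPermHom X hX with hφdef
  have hFinX : Finite X := Subtype.finite
  have hcardX : Nat.card X = m := by rw [Nat.card_coe_set_eq, hm]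
  -- index of the kernel is at most m!
  have hker_index : φ.ker.index ≤ m.factorial := by
    rw [Subgroup.index_ker]
    have h1 : Nat.card φ.range ≤ Nat.card (Equiv.Perm X) :=
      Nat.card_le_card_of_injective _ φ.range.subtype_injective
    have h2 : Nat.card (Equiv.Perm X) = m.factorial := by
      have := Fintype.ofFinite X
      rw [Nat.card_eq_fintype_card, Fintype.card_perm, ← hcardX, Nat.card_eq_fintype_card]
    omega
  -- the kernel intersected with H is central in H
  have hker_le : φ.ker.subgroupOf H ≤ Subgroup.center H := by
    rintro ⟨h, hhH⟩ hker
    rw [Subgroup.mem_subgroupOf, MonoidHom.mem_ker] at hker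
    have hcomm : ∀ x ∈ X, x * h = h * x := by
      intro x hx
      have := congrArg (fun (e : Equiv.Perm X) => (e ⟨x, hx⟩ : G)) hker
      simp only [hφdef, conjPermHom, MonoidHom.coe_mk, OneHom.coe_mk, Equiv.coe_fn_mk,
        Equiv.Perm.coe_one, id_eq] at this
      conv_lhs => rw [← this]
      group
    have hHle : H ≤ Subgroup.centralizer {h} := by
      rw [hHdef]
      refine (Subgroup.closure_le _).mpr fun x hx => ?_
      show x ∈ Subgroup.centralizer {h}
      exact Subgroup.mem_centralizer_singleton_iff.mpr (hcomm x hx)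
    rw [Subgroup.mem_center_iff]
    rintro ⟨g, hgH⟩
    have := Subgroup.mem_centralizer_singleton_iff.mp (hHle hgH)
    exact Subtype.ext this
  -- hence the center of H has index at most m!
  have hcenter_index : (Subgroup.center H).index ≤ m.factorial := by
    have hknormal : φ.ker.Normal := φ.normal_ker
    have hdvd : φ.ker.relIndex H ∣ φ.ker.index :=
      Subgroup.relIndex_dvd_index_of_normal φ.ker H
    have hne : φ.ker.index ≠ 0 := Subgroup.index_ne_zero_of_finite
    have h1 : φ.ker.relIndex H ≤ φ.ker.index :=
      Nat.le_of_dvd (Nat.pos_of_ne_zero hne) hdvd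
    have h2 : (Subgroup.center H).index ∣ (φ.ker.subgroupOf H).index :=
      Subgroup.index_dvd_of_le hker_le
    have hne2 : (φ.ker.subgroupOf H).index ≠ 0 := Subgroup.index_ne_zero_of_finite
    have h3 : (Subgroup.center H).index ≤ (φ.ker.subgroupOf H).index :=
      Nat.le_of_dvd (Nat.pos_of_ne_zero hne2) h2
    have : φ.ker.relIndex H = (φ.ker.subgroupOf H).index := rfl
    omega
  -- so the number of commutators of H is at most (m!)^2
  have hcs : Nat.card (commutatorSet H) ≤ m.factorial ^ 2 :=
    (card_commutatorSet_le_index_center_sq H).trans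
      (Nat.pow_le_pow_left hcenter_index 2)
  -- conclude by Schur's theorem
  have hfin : Finite (commutatorSet H) := Subtype.finite
  calc Nat.card (commutator H)
      ≤ Subgroup.cardCommutatorBound (Nat.card (commutatorSet H)) :=
        Subgroup.card_commutator_le_of_finite_commutatorSet H
    _ ≤ Subgroup.cardCommutatorBound (m.factorial ^ 2) := cardCommutatorBound_mono hcs
end
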